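/- arXiv:1402.2634 — 6 statements merged into one kernel-verified Lean document; each statement's English description precedes it below -/
import Mathlib

section
/- Consider n agents whose closed-loop dynamics over a switching communication graph are q̈_i(t) = −k q̇_i(t) − Σ_{j=1}^n a_{ij}(t)(q_i(t) − q_j(t)) − (q_i(t) − P_{X_i}(q_i(t))), q_i(t) ∈ ℝ^m, where X_1, …, X_n are closed convex sets whose intersection X₀ = ∩_{i=1}^n X_i is nonempty and bounded, and the weights a_{ij}(t) satisfy the switching-weight assumptions with bounds 0 < a_* ≤ a^*. If k > 2 + (n−1)a^*/2, then every solution achieves local target aggregation: lim_{t→∞} ‖q_i(t)‖_{X_i} = 0 and lim_{t→∞} q̇_i(t) = 0 for every i ∈ {1, …, n}. -/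
/-!
Fix `x₀` in the common target set and put `eᵢ = qᵢ - x₀`, `vᵢ = q̇ᵢ`, `fᵢ = qᵢ - P_{Xᵢ}(qᵢ)`.
The Lyapunov function is `V = ∑ᵢ (‖vᵢ‖²/2 + ⟪eᵢ, vᵢ⟫ + k‖eᵢ‖²/2)`. Along solutions the
coupling term `∑ᵢ ⟪eᵢ, ∑ⱼ aᵢⱼ (qᵢ - qⱼ)⟫` equals `½ ∑ᵢⱼ aᵢⱼ ‖qᵢ - qⱼ‖²` by symmetry of the
weights, and it absorbs the Young-inequality remainder of `-⟪vᵢ, ∑ⱼ aᵢⱼ (qᵢ - qⱼ)⟫`, which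
leaves at most `(n-1)a*/2 ‖vᵢ‖²`; the cross term `⟪eᵢ, vᵢ⟫` contributes `-⟪eᵢ, fᵢ⟫ ≤ -‖fᵢ‖²`
because `fᵢ` is a projection residual and `x₀ ∈ Xᵢ`. For `k ≥ 2 + (n-1)a*/2` this gives
`V̇ ≤ -½ ∑ᵢ (‖vᵢ‖² + ‖fᵢ‖²)`, and `V` dominates `∑ᵢ (‖vᵢ‖²/4 + (k/2 - 1)‖eᵢ‖²)`. So the
positions, velocities and accelerations stay bounded, `vᵢ` and `‖fᵢ‖ = dist(qᵢ, Xᵢ)` are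
Lipschitz and square integrable on `[t₀, ∞)`, and Barbalat's lemma makes them tend to `0`.
-/

open Filter Set Metric
open scoped Topology NNReal RealInnerProductSpace

section Barbalat

variable {E : Type*} [NormedAddCommGroup E]

theorem LipschitzWith.norm_pow_three_le_integral {h : ℝ → E} {K : ℝ≥0} (hh : LipschitzWith K h)
    (hK : 0 < K) (t : ℝ) :
    ‖h t‖ ^ 3 ≤ 8 * K * ∫ s in t..t + ‖h t‖ / (2 * K), ‖h s‖ ^ 2 := by
  set c := ‖h t‖
  have hK' : (0 : ℝ) < K := hK
  have hc : 0 ≤ c := norm_nonneg _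
  have hδ : t ≤ t + c / (2 * K) := le_add_of_nonneg_right (by positivity)
  have hlow : ∀ s ∈ Icc t (t + c / (2 * K)), (c / 2) ^ 2 ≤ ‖h s‖ ^ 2 := by
    intro s hs
    have hdrop : c - ‖h s‖ ≤ K * (s - t) := by
      calc c - ‖h s‖ ≤ dist (h t) (h s) := by rw [dist_eq_norm]; exact norm_sub_norm_le _ _
        _ ≤ K * dist t s := hh.dist_le_mul t s
        _ = K * (s - t) := by rw [Real.dist_eq, abs_sub_comm, abs_of_nonneg (by linarith [hs.1])]
    have hwindow : K * (s - t) ≤ c / 2 := by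
      calc (K : ℝ) * (s - t) ≤ K * (c / (2 * K)) := by gcongr; linarith [hs.2]
        _ = c / 2 := by field_simp
    gcongr
    linarith
  have hint := intervalIntegral.integral_mono_on hδ
    (intervalIntegrable_const (μ := MeasureTheory.volume))
    ((hh.continuous.norm.pow 2).intervalIntegrable _ _) hlow
  rw [intervalIntegral.integral_const, smul_eq_mul] at hint
  calc c ^ 3 = 8 * K * ((t + c / (2 * K) - t) * (c / 2) ^ 2) := by field_simp; ring
    _ ≤ _ := by gcongr; exact hint

/-- A form of Barbalat's lemma. -/
theorem LipschitzWith.tendsto_atTop_zero_of_integral_norm_sq_le {h : ℝ → E} {K : ℝ≥0}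
    (hh : LipschitzWith K h) {t₀ I : ℝ} (hI : ∀ T, t₀ ≤ T → ∫ t in t₀..T, ‖h t‖ ^ 2 ≤ I) :
    Tendsto h atTop (𝓝 0) := by
  replace hh : LipschitzWith (K + 1) h := hh.weaken (le_add_of_nonneg_right zero_le_one)
  have hcont : Continuous fun t => ‖h t‖ ^ 2 := hh.continuous.norm.pow 2
  set H : ℝ → ℝ := fun T => ∫ t in t₀..T, ‖h t‖ ^ 2
  have hH : ∀ a b, H b - H a = ∫ t in a..b, ‖h t‖ ^ 2 := fun a b =>
    intervalIntegral.integral_interval_sub_left (hcont.intervalIntegrable _ _)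
      (hcont.intervalIntegrable _ _)
  have hmono : Monotone H := fun a b hab => sub_nonneg.1 <|
    (hH a b).symm ▸ intervalIntegral.integral_nonneg hab fun _ _ => by positivity
  have hbdd : BddAbove (range H) := by
    refine ⟨max I 0, ?_⟩
    rintro _ ⟨T, rfl⟩
    rcases le_total t₀ T with hT | hT
    · exact (hI T hT).trans (le_max_left _ _)
    · exact (hmono hT).trans (by simp [H])
  have hgap : Tendsto (fun t => 8 * (K + 1 : ℝ) * ((⨆ T, H T) - H t)) atTop (𝓝 0) := by
    simpa using ((tendsto_const_nhds (x := ⨆ T, H T)).sub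
      (tendsto_atTop_ciSup hmono hbdd)).const_mul (8 * (K + 1 : ℝ))
  have hcube : Tendsto (fun t => ‖h t‖ ^ 3) atTop (𝓝 0) := by
    refine squeeze_zero (fun t => by positivity) (fun t => ?_) hgap
    calc ‖h t‖ ^ 3 ≤ 8 * (K + 1 : ℝ≥0) * ∫ s in t..t + ‖h t‖ / (2 * (K + 1 : ℝ≥0)), ‖h s‖ ^ 2 :=
          hh.norm_pow_three_le_integral (by positivity) t
      _ = 8 * (K + 1 : ℝ) * (H (t + ‖h t‖ / (2 * (K + 1 : ℝ≥0))) - H t) := by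
          rw [hH]; push_cast; ring
      _ ≤ _ := by gcongr; exact le_ciSup hbdd _
  rw [tendsto_zero_iff_norm_tendsto_zero]
  have := hcube.rpow_const (p := ((3 : ℕ) : ℝ)⁻¹) (Or.inr (by positivity))
  rw [Real.zero_rpow (by norm_num)] at this
  exact this.congr fun t => Real.pow_rpow_inv_natCast (norm_nonneg _) (by norm_num)

theorem LipschitzOnWith.tendsto_atTop_zero_of_integral_norm_sq_le {h : ℝ → E} {K : ℝ≥0}
    {t₀ I : ℝ} (hh : LipschitzOnWith K h (Ici t₀))
    (hI : ∀ T, t₀ ≤ T → ∫ t in t₀..T, ‖h t‖ ^ 2 ≤ I) :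
    Tendsto h atTop (𝓝 0) := by
  have hext : LipschitzWith (K * 1) (h ∘ fun t => max t t₀) :=
    lipschitzOnWith_univ.1 <| hh.comp (LipschitzWith.id.max_const t₀).lipschitzOnWith
      fun t _ => le_max_right t t₀
  refine (hext.tendsto_atTop_zero_of_integral_norm_sq_le (t₀ := t₀) (I := I) fun T hT => ?_).congr'
    ((eventually_ge_atTop t₀).mono fun t ht => by simp [max_eq_left ht])
  refine (le_of_eq (intervalIntegral.integral_congr fun t ht => ?_)).trans (hI T hT)
  rw [uIcc_of_le hT] at ht
  simp [max_eq_left ht.1]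

end Barbalat

theorem infDist_eq_norm_sub_of_forall_norm_sub_le {E : Type*} [SeminormedAddCommGroup E]
    {X : Set E} {x p : E} (hp : p ∈ X) (hmin : ∀ y ∈ X, ‖x - p‖ ≤ ‖x - y‖) :
    infDist x X = ‖x - p‖ := by
  refine le_antisymm ((infDist_le_dist_of_mem hp).trans_eq (dist_eq_norm _ _)) ?_
  exact (le_infDist ⟨p, hp⟩).2 fun y hy => (hmin y hy).trans_eq (dist_eq_norm _ _).symm

section InnerProduct

variable {E : Type*} [NormedAddCommGroup E] [InnerProductSpace ℝ E]

theorem norm_sub_sq_le_inner_of_forall_norm_sub_le {X : Set E} (hX : Convex ℝ X) {x p y : E}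
    (hp : p ∈ X) (hmin : ∀ z ∈ X, ‖x - p‖ ≤ ‖x - z‖) (hy : y ∈ X) :
    ‖x - p‖ ^ 2 ≤ ⟪x - p, x - y⟫ := by
  have : Nonempty X := ⟨⟨p, hp⟩⟩
  have hinf : ‖x - p‖ = ⨅ z : X, ‖x - z‖ :=
    le_antisymm (le_ciInf fun z => hmin z z.2)
      (ciInf_le (f := fun z : X => ‖x - z‖) ⟨0, by rintro _ ⟨z, rfl⟩; positivity⟩ ⟨p, hp⟩)
  have hvi := (norm_eq_iInf_iff_real_inner_le_zero hX hp).1 hinf y hy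
  rw [show x - y = (x - p) - (y - p) by abel, inner_sub_right, real_inner_self_eq_norm_sq]
  linarith

theorem norm_le_of_norm_sq_le_inner {u w : E} (h : ‖u‖ ^ 2 ≤ ⟪u, w⟫) : ‖u‖ ≤ ‖w‖ := by
  nlinarith [real_inner_le_norm u w, norm_nonneg u, norm_nonneg w]

theorem neg_inner_le_norm_sq_add_norm_sq_div_two (u w : E) : -⟪u, w⟫ ≤ (‖u‖ ^ 2 + ‖w‖ ^ 2) / 2 := by
  nlinarith [neg_abs_le ⟪u, w⟫, abs_real_inner_le_norm u w, sq_nonneg (‖u‖ - ‖w‖)]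

noncomputable def energy (k : ℝ) (e v : E) : ℝ := ‖v‖ ^ 2 / 2 + ⟪e, v⟫ + k / 2 * ‖e‖ ^ 2

theorem norm_sq_div_four_add_le_energy (k : ℝ) (e v : E) :
    ‖v‖ ^ 2 / 4 + (k / 2 - 1) * ‖e‖ ^ 2 ≤ energy k e v := by
  unfold energy
  nlinarith [neg_abs_le ⟪e, v⟫, abs_real_inner_le_norm e v, sq_nonneg (‖v‖ / 2 - ‖e‖)]

theorem HasDerivAt.energy {e v : ℝ → E} {e' v' : E} {t : ℝ} (k : ℝ) (he : HasDerivAt e e' t)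
    (hv : HasDerivAt v v' t) :
    HasDerivAt (fun s => energy k (e s) (v s))
      (⟪v t, v'⟫ + ⟪e', v t⟫ + ⟪e t, v'⟫ + k * ⟪e t, e'⟫) t := by
  refine (((hv.norm_sq.div_const 2).add (he.inner ℝ hv)).add
    (he.norm_sq.const_mul (k / 2))).congr_deriv ?_
  ring

variable {ι : Type*} [Fintype ι]

theorem sum_inner_sum_smul_sub {a : ι → ι → ℝ} (ha : ∀ i j, a i j = a j i) (x : ι → E) :
    ∑ i, ⟪x i, ∑ j, a i j • (x i - x j)⟫ = (∑ i, ∑ j, a i j * ‖x i - x j‖ ^ 2) / 2 := by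
  have hpair : ∀ i j, ⟪x i, x i - x j⟫ + ⟪x j, x j - x i⟫ = ‖x i - x j‖ ^ 2 := by
    intro i j
    rw [norm_sub_sq_real, inner_sub_right, inner_sub_right, real_inner_self_eq_norm_sq,
      real_inner_self_eq_norm_sq, real_inner_comm (x i)]
    ring
  have hswap : ∑ i, ∑ j, a i j * ⟪x i, x i - x j⟫ = ∑ i, ∑ j, a i j * ⟪x j, x j - x i⟫ := by
    rw [Finset.sum_comm]
    exact Finset.sum_congr rfl fun i _ => Finset.sum_congr rfl fun j _ => by rw [ha]
  calc ∑ i, ⟪x i, ∑ j, a i j • (x i - x j)⟫ = ∑ i, ∑ j, a i j * ⟪x i, x i - x j⟫ := by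
        simp only [inner_sum, real_inner_smul_right]
    _ = (∑ i, ∑ j, a i j * ⟪x i, x i - x j⟫ + ∑ i, ∑ j, a i j * ⟪x j, x j - x i⟫) / 2 := by
        rw [← hswap]; ring
    _ = (∑ i, ∑ j, a i j * ‖x i - x j‖ ^ 2) / 2 := by
        simp only [← Finset.sum_add_distrib, ← mul_add, hpair]

theorem neg_inner_sum_smul_sub_le (v : E) (x : ι → E) (i : ι) {w : ι → ℝ} {A : ℝ}
    (hw : ∀ j, 0 ≤ w j) (hA : ∀ j, w j ≤ A) :
    -⟪v, ∑ j, w j • (x i - x j)⟫ ≤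
      ((Fintype.card ι : ℝ) - 1) * A / 2 * ‖v‖ ^ 2 + (∑ j, w j * ‖x i - x j‖ ^ 2) / 2 := by
  classical
  have : Nonempty ι := ⟨i⟩
  set others := Finset.univ.erase i
  have hcount : ∑ j ∈ others, w j ≤ ((Fintype.card ι : ℝ) - 1) * A := by
    calc ∑ j ∈ others, w j ≤ ∑ _j ∈ others, A := Finset.sum_le_sum fun j _ => hA j
      _ = _ := by
        rw [Finset.sum_const, Finset.card_erase_of_mem (Finset.mem_univ i), Finset.card_univ,
          nsmul_eq_mul, Nat.cast_sub Fintype.card_pos, Nat.cast_one]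
  have hrest : ∑ j ∈ others, w j * ‖x i - x j‖ ^ 2 ≤ ∑ j, w j * ‖x i - x j‖ ^ 2 :=
    Finset.sum_le_sum_of_subset_of_nonneg (Finset.subset_univ _)
      fun j _ _ => mul_nonneg (hw j) (sq_nonneg _)
  calc -⟪v, ∑ j, w j • (x i - x j)⟫ = ∑ j ∈ others, w j * -⟪v, x i - x j⟫ := by
        rw [inner_sum, ← Finset.sum_erase Finset.univ (a := i) (by simp), ← Finset.sum_neg_distrib]
        exact Finset.sum_congr rfl fun j _ => by rw [real_inner_smul_right, mul_neg]
    _ ≤ ∑ j ∈ others, w j * ((‖v‖ ^ 2 + ‖x i - x j‖ ^ 2) / 2) :=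
        Finset.sum_le_sum fun j _ =>
          mul_le_mul_of_nonneg_left (neg_inner_le_norm_sq_add_norm_sq_div_two _ _) (hw j)
    _ = (∑ j ∈ others, w j) / 2 * ‖v‖ ^ 2 + (∑ j ∈ others, w j * ‖x i - x j‖ ^ 2) / 2 := by
        rw [Finset.sum_div, Finset.sum_mul, Finset.sum_div, ← Finset.sum_add_distrib]
        exact Finset.sum_congr rfl fun j _ => by ring
    _ ≤ _ := by gcongr

theorem sum_energy_rate_le {k A : ℝ} {a : ι → ι → ℝ} (ha_symm : ∀ i j, a i j = a j i)
    (ha_nonneg : ∀ i j, 0 ≤ a i j) (ha_le : ∀ i j, a i j ≤ A)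
    (hk : 2 + ((Fintype.card ι : ℝ) - 1) * A / 2 ≤ k) {x₀ : E} {x v w f : ι → E}
    (hw : ∀ i, w i = -k • v i - ∑ j, a i j • (x i - x j) - f i)
    (hf : ∀ i, ‖f i‖ ^ 2 ≤ ⟪f i, x i - x₀⟫) :
    ∑ i, (⟪v i, w i⟫ + ⟪v i, v i⟫ + ⟪x i - x₀, w i⟫ + k * ⟪x i - x₀, v i⟫) ≤
      -(∑ i, (‖v i‖ ^ 2 + ‖f i‖ ^ 2)) / 2 := by
  have hlaplacian : ∑ i, ⟪x i - x₀, ∑ j, a i j • (x i - x j)⟫ =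
      (∑ i, ∑ j, a i j * ‖x i - x j‖ ^ 2) / 2 := by
    simpa only [sub_sub_sub_cancel_right] using sum_inner_sum_smul_sub ha_symm (x · - x₀)
  have hagent : ∀ i, ⟪v i, w i⟫ + ⟪v i, v i⟫ + ⟪x i - x₀, w i⟫ + k * ⟪x i - x₀, v i⟫ ≤
      -(‖v i‖ ^ 2 + ‖f i‖ ^ 2) / 2 + ((∑ j, a i j * ‖x i - x j‖ ^ 2) / 2 -
        ⟪x i - x₀, ∑ j, a i j • (x i - x j)⟫) := by
    intro i
    have hcoupling := neg_inner_sum_smul_sub_le (v i) x i (ha_nonneg i) (ha_le i)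
    have hcross := neg_inner_le_norm_sq_add_norm_sq_div_two (v i) (f i)
    have hgain : 0 ≤ (k - 2 - ((Fintype.card ι : ℝ) - 1) * A / 2) * ‖v i‖ ^ 2 :=
      mul_nonneg (by linarith) (sq_nonneg _)
    have hres := hf i
    rw [real_inner_comm] at hres
    rw [hw i]
    simp only [inner_sub_right, real_inner_smul_right, real_inner_self_eq_norm_sq]
    linarith
  refine (Finset.sum_le_sum fun i _ => hagent i).trans_eq ?_
  rw [Finset.sum_add_distrib, Finset.sum_sub_distrib, hlaplacian, ← Finset.sum_div,
    ← Finset.sum_div, Finset.sum_neg_distrib]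
  ring

theorem sum_energy_nonneg {k : ℝ} (hk : 2 ≤ k) (e v : ι → E) :
    0 ≤ ∑ i, energy k (e i) (v i) :=
  Finset.sum_nonneg fun i _ => le_trans (by nlinarith [sq_nonneg ‖v i‖, sq_nonneg ‖e i‖])
    (norm_sq_div_four_add_le_energy k (e i) (v i))

theorem norm_le_of_sum_energy_le {k C : ℝ} (hk : 2 < k) {e v : ι → E}
    (h : ∑ i, energy k (e i) (v i) ≤ C) (i : ι) :
    ‖v i‖ ≤ √(C / min (1 / 4) (k / 2 - 1)) ∧ ‖e i‖ ≤ √(C / min (1 / 4) (k / 2 - 1)) := by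
  set μ := min (1 / 4 : ℝ) (k / 2 - 1)
  have hμ : 0 < μ := lt_min (by norm_num) (by linarith)
  have hlow : ∀ j, μ * (‖v j‖ ^ 2 + ‖e j‖ ^ 2) ≤ energy k (e j) (v j) := fun j => by
    nlinarith [norm_sq_div_four_add_le_energy k (e j) (v j), min_le_left (1 / 4 : ℝ) (k / 2 - 1),
      min_le_right (1 / 4 : ℝ) (k / 2 - 1), sq_nonneg ‖v j‖, sq_nonneg ‖e j‖]
  have hi : μ * (‖v i‖ ^ 2 + ‖e i‖ ^ 2) ≤ C := (hlow i).trans <| le_trans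
    (Finset.single_le_sum (fun j _ => (by positivity : 0 ≤ μ * _).trans (hlow j))
      (Finset.mem_univ i)) h
  have hv : ‖v i‖ ^ 2 ≤ C / μ := by rw [le_div_iff₀ hμ]; nlinarith [sq_nonneg ‖e i‖]
  have he : ‖e i‖ ^ 2 ≤ C / μ := by rw [le_div_iff₀ hμ]; nlinarith [sq_nonneg ‖v i‖]
  exact ⟨by simpa using Real.abs_le_sqrt hv, by simpa using Real.abs_le_sqrt he⟩

end InnerProduct

theorem Convex.lipschitzOnWith_toNNReal_of_norm_deriv_le {F : Type*} [NormedAddCommGroup F]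
    [NormedSpace ℝ F] {g : ℝ → F} {s : Set ℝ} (hs : Convex ℝ s)
    (hg : ∀ t ∈ s, DifferentiableAt ℝ g t) {C : ℝ} (hC : ∀ t ∈ s, ‖deriv g t‖ ≤ C) :
    LipschitzOnWith C.toNNReal g s :=
  hs.lipschitzOnWith_of_nnnorm_deriv_le hg fun t ht => by
    rw [← norm_toNNReal]; exact Real.toNNReal_le_toNNReal (hC t ht)

section ClosedLoop

variable {E : Type*} [NormedAddCommGroup E] [InnerProductSpace ℝ E] {ι : Type*} [Fintype ι]
  {q f : ι → ℝ → E} {a : ι → ι → ℝ → ℝ} {k A t₀ : ℝ} {x₀ : E}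

noncomputable def totalEnergy (k : ℝ) (x₀ : E) (q : ι → ℝ → E) (t : ℝ) : ℝ :=
  ∑ i, energy k (q i t - x₀) (deriv (q i) t)

theorem closedLoop_integral_le (hq : ∀ i, Differentiable ℝ (q i))
    (hv : ∀ i, Differentiable ℝ (deriv (q i)))
    (hODE : ∀ i t, t₀ ≤ t → deriv (deriv (q i)) t =
      -k • deriv (q i) t - ∑ j, a i j t • (q i t - q j t) - f i t)
    (hf : ∀ i t, ‖f i t‖ ^ 2 ≤ ⟪f i t, q i t - x₀⟫) (hf_cont : ∀ i, Continuous fun t => ‖f i t‖)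
    (ha_symm : ∀ i j t, a i j t = a j i t) (ha_nonneg : ∀ i j t, 0 ≤ a i j t)
    (ha_le : ∀ i j t, t₀ ≤ t → a i j t ≤ A) (hk : 2 + ((Fintype.card ι : ℝ) - 1) * A / 2 ≤ k) :
    ∀ T, t₀ ≤ T → ∫ t in t₀..T, ∑ i, (‖deriv (q i) t‖ ^ 2 + ‖f i t‖ ^ 2) ≤
      2 * (totalEnergy k x₀ q t₀ - totalEnergy k x₀ q T) := by
  intro T hT
  have hV : ∀ t, HasDerivAt (totalEnergy k x₀ q) (∑ i, (⟪deriv (q i) t, deriv (deriv (q i)) t⟫ +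
      ⟪deriv (q i) t, deriv (q i) t⟫ + ⟪q i t - x₀, deriv (deriv (q i)) t⟫ +
      k * ⟪q i t - x₀, deriv (q i) t⟫)) t := fun t =>
    HasDerivAt.fun_sum fun i _ => ((hq i t).hasDerivAt.sub_const x₀).energy k (hv i t).hasDerivAt
  have hG : Continuous fun t => ∑ i, (‖deriv (q i) t‖ ^ 2 + ‖f i t‖ ^ 2) :=
    continuous_finsetSum _ fun i _ => ((hv i).continuous.norm.pow 2).add ((hf_cont i).pow 2)
  have hint := intervalIntegral.integral_le_sub_of_hasDeriv_right_of_le hT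
    (g := fun t => -2 * totalEnergy k x₀ q t)
    (continuous_iff_continuousAt.2 fun t => ((hV t).const_mul (-2)).continuousAt).continuousOn
    (fun t _ => ((hV t).const_mul (-2)).hasDerivWithinAt) hG.integrableOn_Icc fun t ht => by
      have hrate := sum_energy_rate_le (fun i j => ha_symm i j t) (fun i j => ha_nonneg i j t)
        (fun i j => ha_le i j t ht.1.le) hk (fun i => hODE i t ht.1.le) (fun i => hf i t)
      linarith
  linarith

theorem closedLoop_lipschitzOnWith (hq : ∀ i, Differentiable ℝ (q i))
    (hv : ∀ i, Differentiable ℝ (deriv (q i)))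
    (hODE : ∀ i t, t₀ ≤ t → deriv (deriv (q i)) t =
      -k • deriv (q i) t - ∑ j, a i j t • (q i t - q j t) - f i t)
    (hf : ∀ i t, ‖f i t‖ ^ 2 ≤ ⟪f i t, q i t - x₀⟫) (ha_nonneg : ∀ i j t, 0 ≤ a i j t)
    (ha_le : ∀ i j t, t₀ ≤ t → a i j t ≤ A) {B : ℝ}
    (hB : ∀ i t, t₀ ≤ t → ‖deriv (q i) t‖ ≤ B ∧ ‖q i t - x₀‖ ≤ B) :
    ∃ K, ∀ i, LipschitzOnWith K (q i) (Ici t₀) ∧ LipschitzOnWith K (deriv (q i)) (Ici t₀) := by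
  set C := |k| * B + Fintype.card ι * (A * (2 * B)) + B
  have hacc : ∀ i t, t₀ ≤ t → ‖deriv (deriv (q i)) t‖ ≤ C := by
    intro i t ht
    obtain ⟨hvB, heB⟩ := hB i t ht
    have hB0 : 0 ≤ B := (norm_nonneg _).trans hvB
    have hA0 : 0 ≤ A := (ha_nonneg i i t).trans (ha_le i i t ht)
    have hcoupling : ‖∑ j, a i j t • (q i t - q j t)‖ ≤ Fintype.card ι * (A * (2 * B)) := by
      refine (norm_sum_le _ _).trans ?_
      calc ∑ j, ‖a i j t • (q i t - q j t)‖ ≤ ∑ _j : ι, A * (2 * B) := by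
            refine Finset.sum_le_sum fun j _ => ?_
            rw [norm_smul, Real.norm_of_nonneg (ha_nonneg i j t), ← sub_sub_sub_cancel_right _ _ x₀]
            exact mul_le_mul (ha_le i j t ht)
              ((norm_sub_le _ _).trans (by linarith [(hB j t ht).2])) (norm_nonneg _) hA0
        _ = _ := by simp
    rw [hODE i t ht]
    calc ‖-k • deriv (q i) t - ∑ j, a i j t • (q i t - q j t) - f i t‖
        ≤ ‖-k • deriv (q i) t‖ + ‖∑ j, a i j t • (q i t - q j t)‖ + ‖f i t‖ :=
          norm_sub_le_of_le (norm_sub_le _ _) le_rfl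
      _ ≤ |k| * B + Fintype.card ι * (A * (2 * B)) + B := by
          rw [norm_smul, Real.norm_eq_abs, abs_neg]
          gcongr
          exact (norm_le_of_norm_sq_le_inner (hf i t)).trans heB
  refine ⟨(max B C).toNNReal, fun i => ⟨?_, ?_⟩⟩
  · exact (convex_Ici t₀).lipschitzOnWith_toNNReal_of_norm_deriv_le (fun t _ => hq i t)
      fun t ht => (hB i t ht).1.trans (le_max_left _ _)
  · exact (convex_Ici t₀).lipschitzOnWith_toNNReal_of_norm_deriv_le (fun t _ => hv i t)
      fun t ht => (hacc i t ht).trans (le_max_right _ _)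

theorem exists_bound_of_dissipation (hk : 2 < k)
    (hdiss : ∀ T, t₀ ≤ T → ∫ t in t₀..T, ∑ i, (‖deriv (q i) t‖ ^ 2 + ‖f i t‖ ^ 2) ≤
      2 * (totalEnergy k x₀ q t₀ - totalEnergy k x₀ q T)) :
    ∃ B, ∀ i t, t₀ ≤ t → ‖deriv (q i) t‖ ≤ B ∧ ‖q i t - x₀‖ ≤ B := by
  refine ⟨_, fun i t ht => norm_le_of_sum_energy_le (C := totalEnergy k x₀ q t₀)
    (e := fun j => q j t - x₀) (v := fun j => deriv (q j) t) hk ?_ i⟩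
  change totalEnergy k x₀ q t ≤ totalEnergy k x₀ q t₀
  have hG := intervalIntegral.integral_nonneg (μ := MeasureTheory.volume)
    (f := fun s => ∑ i, (‖deriv (q i) s‖ ^ 2 + ‖f i s‖ ^ 2)) ht fun s _ => by positivity
  linarith [hdiss t ht]

theorem integral_norm_sq_le_of_dissipation (hk : 2 ≤ k) (hv : ∀ i, Continuous (deriv (q i)))
    (hf_cont : ∀ i, Continuous fun t => ‖f i t‖)
    (hdiss : ∀ T, t₀ ≤ T → ∫ t in t₀..T, ∑ i, (‖deriv (q i) t‖ ^ 2 + ‖f i t‖ ^ 2) ≤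
      2 * (totalEnergy k x₀ q t₀ - totalEnergy k x₀ q T)) (i : ι) (T : ℝ) (hT : t₀ ≤ T) :
    ∫ t in t₀..T, ‖deriv (q i) t‖ ^ 2 ≤ 2 * totalEnergy k x₀ q t₀ ∧
      ∫ t in t₀..T, ‖f i t‖ ^ 2 ≤ 2 * totalEnergy k x₀ q t₀ := by
  have hVT : 0 ≤ totalEnergy k x₀ q T := sum_energy_nonneg hk _ _
  have hG : Continuous fun t => ∑ i, (‖deriv (q i) t‖ ^ 2 + ‖f i t‖ ^ 2) :=
    continuous_finsetSum _ fun i _ => ((hv i).norm.pow 2).add ((hf_cont i).pow 2)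
  have hterm : ∀ t, ‖deriv (q i) t‖ ^ 2 + ‖f i t‖ ^ 2 ≤
      ∑ i, (‖deriv (q i) t‖ ^ 2 + ‖f i t‖ ^ 2) := fun t =>
    Finset.single_le_sum (f := fun i => ‖deriv (q i) t‖ ^ 2 + ‖f i t‖ ^ 2)
      (fun j _ => by positivity) (Finset.mem_univ i)
  have hmono : ∀ g : ℝ → ℝ, Continuous g →
      (∀ t, g t ≤ ∑ i, (‖deriv (q i) t‖ ^ 2 + ‖f i t‖ ^ 2)) →
      ∫ t in t₀..T, g t ≤ 2 * totalEnergy k x₀ q t₀ := fun g hg hle =>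
    (intervalIntegral.integral_mono_on hT (hg.intervalIntegrable _ _)
      (hG.intervalIntegrable _ _) fun t _ => hle t).trans (by linarith [hdiss T hT])
  exact ⟨hmono _ ((hv i).norm.pow 2) fun t => (le_add_of_nonneg_right (by positivity)).trans
    (hterm t), hmono _ ((hf_cont i).pow 2) fun t => (le_add_of_nonneg_left (by positivity)).trans
    (hterm t)⟩

end ClosedLoop

theorem statement1_general
    (m n : ℕ)
    -- the local target sets
    (X : Fin n → Set (EuclideanSpace ℝ (Fin m)))
    (hXconvex : ∀ i, Convex ℝ (X i))
    (hX0ne : (⋂ i, X i).Nonempty)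
    -- the Euclidean projections onto the local target sets
    (P : Fin n → EuclideanSpace ℝ (Fin m) → EuclideanSpace ℝ (Fin m))
    (hPmem : ∀ i x, P i x ∈ X i)
    (hPproj : ∀ i x, ∀ y ∈ X i, ‖x - P i x‖ ≤ ‖x - y‖)
    (t₀ : ℝ)
    -- the time-varying weights: symmetric, nonnegative, bounded on their support
    (a : Fin n → Fin n → ℝ → ℝ)
    (ha_symm : ∀ i j t, a i j t = a j i t)
    (ha_nonneg : ∀ i j t, 0 ≤ a i j t)
    (alow ahigh : ℝ) (halow : 0 < alow) (hahigh : alow ≤ ahigh)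
    (hbounds : ∀ i j t, t₀ ≤ t → a i j t ≠ 0 → alow ≤ a i j t ∧ a i j t ≤ ahigh)
    -- gain condition `k > 2 + (n-1)a*/2`
    (k : ℝ) (hk : 2 + (n - 1 : ℝ) * ahigh / 2 < k)
    -- a C² solution of the closed-loop system on `[t₀, ∞)`
    (q : Fin n → ℝ → EuclideanSpace ℝ (Fin m))
    (hq : ∀ i, ContDiff ℝ 2 (q i))
    (hODE : ∀ i t, t₀ ≤ t →
      deriv (deriv (q i)) t
        = -k • deriv (q i) t - (∑ j, a i j t • (q i t - q j t))
          - (q i t - P i (q i t))) :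
    (∀ i, Filter.Tendsto (fun t => Metric.infDist (q i t) (X i)) Filter.atTop (𝓝 0)) ∧
    (∀ i, Filter.Tendsto (deriv (q i)) Filter.atTop (𝓝 0)) := by
  obtain ⟨x₀, hx₀⟩ := hX0ne
  set f : Fin n → ℝ → EuclideanSpace ℝ (Fin m) := fun i t => q i t - P i (q i t)
  have hdist : ∀ i t, infDist (q i t) (X i) = ‖f i t‖ := fun i t =>
    infDist_eq_norm_sub_of_forall_norm_sub_le (hPmem i _) (hPproj i _)
  have hf : ∀ i t, ‖f i t‖ ^ 2 ≤ ⟪f i t, q i t - x₀⟫ := fun i t =>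
    norm_sub_sq_le_inner_of_forall_norm_sub_le (hXconvex i) (hPmem i _) (hPproj i _)
      (mem_iInter.1 hx₀ i)
  have hf_cont : ∀ i, Continuous fun t => ‖f i t‖ := fun i => by
    simp only [← hdist]; exact (continuous_infDist_pt (X i)).comp (hq i).continuous
  have ha_le : ∀ i j t, t₀ ≤ t → a i j t ≤ ahigh := fun i j t ht =>
    (eq_or_ne (a i j t) 0).elim (fun h => h ▸ halow.le.trans hahigh) fun h =>
      (hbounds i j t ht h).2
  have hq₁ : ∀ i, Differentiable ℝ (q i) := fun i => (hq i).differentiable (by norm_num)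
  have hq₂ : ∀ i, Differentiable ℝ (deriv (q i)) := fun i => (hq i).differentiable_deriv_two
  have hdiss := closedLoop_integral_le hq₁ hq₂ hODE hf hf_cont ha_symm ha_nonneg ha_le
    (by simpa using hk.le)
  suffices ∀ i, Tendsto (fun t => infDist (q i t) (X i)) atTop (𝓝 0) ∧
      Tendsto (deriv (q i)) atTop (𝓝 0) from ⟨fun i => (this i).1, fun i => (this i).2⟩
  intro i
  have hk₂ : 2 < k := by
    have : (1 : ℝ) ≤ n := by exact_mod_cast i.pos
    nlinarith [halow.le.trans hahigh]
  obtain ⟨B, hB⟩ := exists_bound_of_dissipation hk₂ hdiss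
  obtain ⟨K, hK⟩ := closedLoop_lipschitzOnWith hq₁ hq₂ hODE hf ha_nonneg ha_le hB
  have hI := integral_norm_sq_le_of_dissipation hk₂.le (fun j => (hq₂ j).continuous) hf_cont
    hdiss i
  have hdist_lip : LipschitzOnWith (1 * K) (fun t => infDist (q i t) (X i)) (Ici t₀) :=
    (lipschitz_infDist_pt (X i)).comp_lipschitzOnWith (hK i).1
  refine ⟨hdist_lip.tendsto_atTop_zero_of_integral_norm_sq_le (I := 2 * totalEnergy k x₀ q t₀)
    fun T hT => ?_, (hK i).2.tendsto_atTop_zero_of_integral_norm_sq_le fun T hT => (hI T hT).1⟩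
  simpa [hdist] using (hI T hT).2

/-- Local target aggregation for the switching-graph closed loop
`q̈ᵢ = -k q̇ᵢ - ∑ⱼ aᵢⱼ(t)(qᵢ - qⱼ) - (qᵢ - P_{Xᵢ}(qᵢ))` with `k > 2 + (n-1)a*/2`. -/
theorem statement1
    (m n : ℕ) (hn : 0 < n)
    -- the local target sets
    (X : Fin n → Set (EuclideanSpace ℝ (Fin m)))
    (hXclosed : ∀ i, IsClosed (X i))
    (hXconvex : ∀ i, Convex ℝ (X i))
    (hX0ne : (⋂ i, X i).Nonempty)
    (hX0bdd : Bornology.IsBounded (⋂ i, X i))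
    -- the Euclidean projections onto the local target sets
    (P : Fin n → EuclideanSpace ℝ (Fin m) → EuclideanSpace ℝ (Fin m))
    (hPmem : ∀ i x, P i x ∈ X i)
    (hPproj : ∀ i x, ∀ y ∈ X i, ‖x - P i x‖ ≤ ‖x - y‖)
    -- switching times with dwell time `τd`, starting at `t₀`
    (t₀ τd : ℝ) (hτd : 0 < τd)
    (times : ℕ → ℝ) (htimes0 : times 0 = t₀)
    (hdwell : ∀ l, times l + τd ≤ times (l + 1))
    -- the time-varying weights: symmetric, nonnegative, bounded on their support
    (a : Fin n → Fin n → ℝ → ℝ)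
    (ha_symm : ∀ i j t, a i j t = a j i t)
    (ha_nonneg : ∀ i j t, 0 ≤ a i j t)
    (alow ahigh : ℝ) (halow : 0 < alow) (hahigh : alow ≤ ahigh)
    (hbounds : ∀ i j t, t₀ ≤ t → a i j t ≠ 0 → alow ≤ a i j t ∧ a i j t ≤ ahigh)
    -- continuity between switching times, and constant zero/nonzero pattern there
    (hcont : ∀ i j l, ContinuousOn (a i j) (Set.Ico (times l) (times (l + 1))))
    (hpattern : ∀ i j l, ∀ s ∈ Set.Ico (times l) (times (l + 1)),
      ∀ t ∈ Set.Ico (times l) (times (l + 1)), (a i j s ≠ 0 ↔ a i j t ≠ 0))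
    -- gain condition `k > 2 + (n-1)a*/2`
    (k : ℝ) (hk : 2 + (n - 1 : ℝ) * ahigh / 2 < k)
    -- a C² solution of the closed-loop system on `[t₀, ∞)`
    (q : Fin n → ℝ → EuclideanSpace ℝ (Fin m))
    (hq : ∀ i, ContDiff ℝ 2 (q i))
    (hODE : ∀ i t, t₀ ≤ t →
      deriv (deriv (q i)) t
        = -k • deriv (q i) t - (∑ j, a i j t • (q i t - q j t))
          - (q i t - P i (q i t))) :
    (∀ i, Filter.Tendsto (fun t => Metric.infDist (q i t) (X i)) Filter.atTop (𝓝 0)) ∧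
    (∀ i, Filter.Tendsto (deriv (q i)) Filter.atTop (𝓝 0)) :=
  statement1_general m n X hXconvex hX0ne P hPmem hPproj t₀ a ha_symm ha_nonneg alow ahigh halow
    hahigh hbounds k hk q hq hODE
end

section
/- Let V = {1, …, n} and suppose for each i ∈ V the function V_i : ℝ × ℝ^m → ℝ is continuously differentiable, and x : ℝ → ℝ^m is differentiable. Define V(t) = max_{i∈V} V_i(t, x(t)), and let V₁(t) = {i ∈ V : V_i(t, x(t)) = V(t)} be the set of indices at which the maximum is attained at time t. Then the upper Dini derivative of V satisfies D⁺V(t) = max_{i∈V₁(t)} (d/dt)V_i(t, x(t)). -/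
open scoped Topology BigOperators

/-!
On a finite index set, an index that does not attain the maximum at `t` stays strictly below one
that does on a neighbourhood of `t`, so near `t` the maximum is the maximum over the active
indices only. These all share the value at `t`, so the difference quotient of their maximum
is the maximum of their difference quotients, and a finite maximum commutes with limits.
-/

open Filter Set

theorem HasDerivWithinAt.tendsto_slope_zero_right {f : ℝ → ℝ} {f' x : ℝ}
    (h : HasDerivWithinAt f f' (Ioi x) x) :
    Tendsto (fun t => (f (x + t) - f x) / t) (𝓝[>] 0) (𝓝 f') := by
  have hshift : Tendsto (x + ·) (𝓝[>] (0 : ℝ)) (𝓝[>] x) := by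
    rw [Tendsto, map_add_left_nhdsGT, add_zero]
  have hslope := ((hasDerivWithinAt_iff_tendsto_slope' self_notMem_Ioi).1 h).comp hshift
  simpa [slope, Function.comp_def, div_eq_inv_mul] using hslope

section FiniteMax

variable {ι : Type*} [Finite ι]

theorem Filter.Tendsto.ciSup_nhds {L α : Type*} [ConditionallyCompleteLattice L]
    [TopologicalSpace L] [ContinuousSup L] [Nonempty ι] {l : Filter α} {f : ι → α → L}
    {g : ι → L} (hf : ∀ i, Tendsto (f i) l (𝓝 (g i))) :
    Tendsto (fun a => ⨆ i, f i a) l (𝓝 (⨆ i, g i)) := by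
  cases nonempty_fintype ι
  simpa only [← Finset.sup'_univ_eq_ciSup] using
    Tendsto.finset_sup'_nhds_apply Finset.univ_nonempty fun i _ => hf i

theorem eventually_ciSup_eq_ciSup_argmax {L X : Type*} [ConditionallyCompleteLinearOrder L]
    [TopologicalSpace L] [OrderClosedTopology L] [TopologicalSpace X] [Nonempty ι]
    {f : ι → X → L} {s : Set X} {x : X} (hf : ∀ i, ContinuousWithinAt (f i) s x) :
    ∀ᶠ y in 𝓝[s] x, ⨆ i, f i y = ⨆ i : {i // f i x = ⨆ j, f j x}, f i y := by
  obtain ⟨i₀, hi₀⟩ := exists_eq_ciSup_of_finite (f := fun j => f j x)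
  have hle : ∀ j, ∀ᶠ y in 𝓝[s] x, f j y ≤ ⨆ i : {i // f i x = ⨆ j, f j x}, f i y := by
    intro j
    by_cases hj : f j x = ⨆ k, f k x
    · exact .of_forall fun y => le_ciSup (f := fun i : {i // f i x = ⨆ j, f j x} => f i y)
        (Finite.bddAbove_range _) ⟨j, hj⟩
    · have hlt : f j x < f i₀ x :=
        hi₀ ▸ (le_ciSup (f := fun k => f k x) (Finite.bddAbove_range _) j).lt_of_ne hj
      filter_upwards [(hf j).eventually_lt (hf i₀) hlt] with y hy
      exact hy.le.trans (le_ciSup (f := fun i : {i // f i x = ⨆ j, f j x} => f i y)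
        (Finite.bddAbove_range _) ⟨i₀, hi₀⟩)
  have : Nonempty {i // f i x = ⨆ j, f j x} := ⟨⟨i₀, hi₀⟩⟩
  filter_upwards [eventually_all.2 hle] with y hy
  exact le_antisymm (ciSup_le hy)
    (ciSup_le fun i => le_ciSup (f := fun j => f j y) (Finite.bddAbove_range _) i.1)

theorem ciSup_slope_of_forall_eq [Nonempty ι] {f : ι → ℝ → ℝ} {a b c : ℝ} (hab : a ≤ b)
    (hf : ∀ i, f i a = c) : ⨆ i, slope (f i) a b = ((⨆ i, f i b) - c) / (b - a) := by
  simp only [slope_def_field, hf, div_eq_inv_mul]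
  rw [ciSup_sub (Finite.bddAbove_range fun i => f i b),
    Real.mul_iSup_of_nonneg (inv_nonneg.2 (sub_nonneg.2 hab))]

theorem hasDerivWithinAt_Ioi_ciSup {f : ι → ℝ → ℝ} {f' : ι → ℝ} {t : ℝ}
    (hf : ∀ i, HasDerivWithinAt (f i) (f' i) (Ioi t) t) :
    HasDerivWithinAt (fun s => ⨆ i, f i s) (⨆ i : {i // f i t = ⨆ j, f j t}, f' i) (Ioi t) t := by
  rcases isEmpty_or_nonempty ι with _ | _
  · simpa [Real.iSup_of_isEmpty] using hasDerivWithinAt_const t (Ioi t) (0 : ℝ)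
  obtain ⟨i₀, hi₀⟩ := exists_eq_ciSup_of_finite (f := fun j => f j t)
  have : Nonempty {i // f i t = ⨆ j, f j t} := ⟨⟨i₀, hi₀⟩⟩
  have hslope i := (hasDerivWithinAt_iff_tendsto_slope' self_notMem_Ioi).1 (hf i)
  rw [hasDerivWithinAt_iff_tendsto_slope' self_notMem_Ioi]
  refine (Tendsto.ciSup_nhds (ι := {i // f i t = ⨆ j, f j t}) fun i => hslope i.1).congr' ?_
  filter_upwards [eventually_ciSup_eq_ciSup_argmax fun i => (hf i).continuousWithinAt,
    self_mem_nhdsWithin] with s hs (hts : t < s)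
  rw [ciSup_slope_of_forall_eq hts.le fun i => i.2, ← hs, slope_def_field]

end FiniteMax

theorem statement4_general
    (m n : ℕ)
    (V : Fin n → ℝ × EuclideanSpace ℝ (Fin m) → ℝ)
    (hV : ∀ i, ContDiff ℝ 1 (V i))
    (x : ℝ → EuclideanSpace ℝ (Fin m))
    (hx : Differentiable ℝ x)
    (t : ℝ) :
    Filter.limsup
        (fun τ => ((⨆ i, V i (t + τ, x (t + τ))) - ⨆ i, V i (t, x t)) / τ)
        (𝓝[>] (0 : ℝ))
      = ⨆ i : {i : Fin n // V i (t, x t) = ⨆ j, V j (t, x t)},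
          deriv (fun s => V i.1 (s, x s)) t := by
  have hderiv : ∀ i, HasDerivAt (fun s => V i (s, x s)) (deriv (fun s => V i (s, x s)) t) t :=
    fun i => (((hV i).differentiable one_ne_zero).comp (differentiable_id.prodMk hx) t).hasDerivAt
  exact (hasDerivWithinAt_Ioi_ciSup fun i => (hderiv i).hasDerivWithinAt)
    |>.tendsto_slope_zero_right.limsup_eq

/-- (Danskin-type lemma for Dini derivatives.) If each `Vᵢ` is C¹ and
`x` is differentiable, then the upper Dini derivative of `t ↦ maxᵢ Vᵢ(t, x(t))` equals
the maximum of the derivatives `(d/dt)Vᵢ(t, x(t))` over the active index set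
`V₁(t) = {i : Vᵢ(t, x(t)) = maxⱼ Vⱼ(t, x(t))}`. -/
theorem statement4
    (m n : ℕ) (hn : 0 < n)
    (V : Fin n → ℝ × EuclideanSpace ℝ (Fin m) → ℝ)
    (hV : ∀ i, ContDiff ℝ 1 (V i))
    (x : ℝ → EuclideanSpace ℝ (Fin m))
    (hx : Differentiable ℝ x)
    (t : ℝ) :
    Filter.limsup
        (fun τ => ((⨆ i, V i (t + τ, x (t + τ))) - ⨆ i, V i (t, x t)) / τ)
        (𝓝[>] (0 : ℝ))
      = ⨆ i : {i : Fin n // V i (t, x t) = ⨆ j, V j (t, x t)},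
          deriv (fun s => V i.1 (s, x s)) t :=
  statement4_general m n V hV x hx t
end

section
/- Let n ∈ ℕ, k > 0, and let x_1, …, x_{2n} : [t₀, ∞) → ℝ be differentiable functions satisfying, for each i ∈ {1, …, n}, ẋ_i(t) = −(k/2)(x_i(t) − x_{n+i}(t)) and ẋ_{n+i}(t) = −(k/2)(x_{n+i}(t) − x_i(t)) − (2/k) Σ_{j=1}^n a_{ij}(t)(x_{n+i}(t) − x_{n+j}(t)) + δ_i(t), where a_{ij}(t) ≥ 0 for all i, j, t and δ_i : [t₀, ∞) → ℝ. Define ℏ(t) = max_{i∈{1,…,2n}} x_i(t) and ℓ(t) = min_{i∈{1,…,2n}} x_i(t). Then for all t ≥ t₀, D⁺ℏ(t) ≤ max_{i∈{1,…,n}} |δ_i(t)| and D⁺ℓ(t) ≥ −max_{i∈{1,…,n}} |δ_i(t)|. -/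
open scoped Topology BigOperators

open Filter in
private lemma tendsto_quot' {f : ℝ → ℝ} {t : ℝ} (hf : DifferentiableAt ℝ f t) :
    Tendsto (fun τ => (f (t + τ) - f t) / τ) (𝓝[>] (0:ℝ)) (𝓝 (deriv f t)) := by
  have h := hasDerivAt_iff_tendsto_slope.1 hf.hasDerivAt
  have hmap : Tendsto (fun τ : ℝ => t + τ) (𝓝[>] (0:ℝ)) (𝓝[≠] t) := by
    apply tendsto_nhdsWithin_of_tendsto_nhds_of_eventually_within
    · have : Tendsto (fun τ : ℝ => t + τ) (𝓝 (0:ℝ)) (𝓝 t) := by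
        simpa using (tendsto_const_nhds.add tendsto_id : Tendsto (fun τ : ℝ => t + τ) (𝓝 0) (𝓝 (t + 0)))
      exact this.mono_left nhdsWithin_le_nhds
    · filter_upwards [self_mem_nhdsWithin] with τ (hτ : (0:ℝ) < τ)
      simp only [Set.mem_compl_iff, Set.mem_singleton_iff]
      intro hc
      exact hτ.ne' (by linarith)
  have h2 := h.comp hmap
  refine h2.congr fun τ => ?_
  simp [slope_def_field, Function.comp]

open Filter in
private lemma dini_max_le {ι : Type*} [Fintype ι] [Nonempty ι] (f : ι → ℝ → ℝ)
    (t : ℝ) (hf : ∀ i, DifferentiableAt ℝ (f i) t) (c : ℝ)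
    (hc : ∀ i, (⨆ j, f j t) = f i t → deriv (f i) t ≤ c) :
    Filter.limsup (fun τ => ((⨆ i, f i (t + τ)) - ⨆ i, f i t) / τ) (𝓝[>] (0:ℝ)) ≤ c := by
  set F : ℝ → ℝ := fun s => ⨆ i, f i s with hFdef
  have hbdd : ∀ s, BddAbove (Set.range fun i => f i s) := fun s => (Set.finite_range _).bddAbove
  obtain ⟨i0, hi0⟩ := Finite.exists_max (fun i => f i t)
  have hFt : F t = f i0 t := le_antisymm (ciSup_le hi0) (le_ciSup (hbdd t) i0)
  -- lower eventual bound, for coboundedness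
  have hlb : ∀ᶠ τ in 𝓝[>] (0:ℝ), deriv (f i0) t - 1 ≤ (F (t+τ) - F t)/τ := by
    have h1 : ∀ᶠ τ in 𝓝[>] (0:ℝ), deriv (f i0) t - 1 < (f i0 (t+τ) - f i0 t)/τ :=
      (tendsto_quot' (hf i0)).eventually_const_lt (by linarith)
    filter_upwards [h1, self_mem_nhdsWithin] with τ h1 (hτ : (0:ℝ) < τ)
    have h2 : f i0 (t+τ) ≤ F (t+τ) := le_ciSup (hbdd _) i0
    have h3 : (f i0 (t+τ) - f i0 t)/τ ≤ (F (t+τ) - F t)/τ := by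
      rw [hFt]; gcongr
    linarith
  have hcob : IsCoboundedUnder (· ≤ ·) (𝓝[>] (0:ℝ)) (fun τ => (F (t+τ) - F t)/τ) :=
    (isBoundedUnder_of_eventually_ge hlb).isCoboundedUnder_le
  refine le_of_forall_pos_le_add fun ε hε => ?_
  have key : ∀ i, ∀ᶠ τ in 𝓝[>] (0:ℝ), f i (t+τ) ≤ F t + (c + ε) * τ := by
    intro i
    have hq : ∀ᶠ τ in 𝓝[>] (0:ℝ), (f i (t+τ) - f i t)/τ < deriv (f i) t + ε :=
      (tendsto_quot' (hf i)).eventually_lt_const (by linarith)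
    have hle : f i t ≤ F t := le_ciSup (hbdd t) i
    rcases eq_or_lt_of_le hle with heq | hlt
    · have hd : deriv (f i) t ≤ c := hc i heq.symm
      filter_upwards [hq, self_mem_nhdsWithin] with τ hq (hτ : (0:ℝ) < τ)
      rw [div_lt_iff₀ hτ] at hq
      nlinarith
    · set d := deriv (f i) t with hd
      have hr : 0 < (F t - f i t)/(|d - c| + 1) := by
        apply div_pos (by linarith) (by positivity)
      have hsmall : ∀ᶠ τ in 𝓝[>] (0:ℝ), τ < (F t - f i t)/(|d - c| + 1) :=
        eventually_nhdsWithin_of_eventually_nhds (eventually_lt_nhds hr)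
      filter_upwards [hq, hsmall, self_mem_nhdsWithin] with τ hq hsm (hτ : (0:ℝ) < τ)
      rw [div_lt_iff₀ hτ] at hq
      have habs : (d - c) * τ ≤ F t - f i t := by
        have h1 : (d - c) * τ ≤ |d - c| * τ := by
          apply mul_le_mul_of_nonneg_right (le_abs_self _) hτ.le
        have h2 : |d - c| * τ ≤ (|d - c| + 1) * τ := by nlinarith
        have h3 : (|d - c| + 1) * τ < F t - f i t := by
          rw [mul_comm, ← lt_div_iff₀ (by positivity)]
          exact hsm
        linarith
      nlinarith
  have hub : ∀ᶠ τ in 𝓝[>] (0:ℝ), (F (t+τ) - F t)/τ ≤ c + ε := by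
    filter_upwards [eventually_all.2 key, self_mem_nhdsWithin] with τ hall (hτ : (0:ℝ) < τ)
    have : F (t+τ) ≤ F t + (c+ε)*τ := ciSup_le fun i => hall i
    rw [div_le_iff₀ hτ]; linarith
  exact limsup_le_of_le hcob hub

open Filter in
private lemma dini_min_ge {ι : Type*} [Fintype ι] [Nonempty ι] (f : ι → ℝ → ℝ)
    (t : ℝ) (hf : ∀ i, DifferentiableAt ℝ (f i) t) (c : ℝ)
    (hc : ∀ i, (⨅ j, f j t) = f i t → c ≤ deriv (f i) t) :
    c ≤ Filter.limsup (fun τ => ((⨅ i, f i (t + τ)) - ⨅ i, f i t) / τ) (𝓝[>] (0:ℝ)) := by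
  set G : ℝ → ℝ := fun s => ⨅ i, f i s with hGdef
  have hbdd : ∀ s, BddBelow (Set.range fun i => f i s) := fun s => (Set.finite_range _).bddBelow
  obtain ⟨i0, hi0⟩ := Finite.exists_min (fun i => f i t)
  have hGt : G t = f i0 t := le_antisymm (ciInf_le (hbdd t) i0) (le_ciInf hi0)
  -- upper eventual bound, for boundedness
  have hub : ∀ᶠ τ in 𝓝[>] (0:ℝ), (G (t+τ) - G t)/τ ≤ deriv (f i0) t + 1 := by
    have h1 : ∀ᶠ τ in 𝓝[>] (0:ℝ), (f i0 (t+τ) - f i0 t)/τ < deriv (f i0) t + 1 :=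
      (tendsto_quot' (hf i0)).eventually_lt_const (by linarith)
    filter_upwards [h1, self_mem_nhdsWithin] with τ h1 (hτ : (0:ℝ) < τ)
    have h2 : G (t+τ) ≤ f i0 (t+τ) := ciInf_le (hbdd _) i0
    have h3 : (G (t+τ) - G t)/τ ≤ (f i0 (t+τ) - f i0 t)/τ := by
      rw [hGt]; gcongr
    linarith
  have hbound : IsBoundedUnder (· ≤ ·) (𝓝[>] (0:ℝ)) (fun τ => (G (t+τ) - G t)/τ) :=
    isBoundedUnder_of_eventually_le hub
  have hstep : ∀ ε : ℝ, 0 < ε → c ≤ Filter.limsup (fun τ => (G (t+τ) - G t)/τ) (𝓝[>] (0:ℝ)) + ε := by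
    intro ε hε
    have key : ∀ i, ∀ᶠ τ in 𝓝[>] (0:ℝ), G t + (c - ε) * τ ≤ f i (t+τ) := by
      intro i
      have hq : ∀ᶠ τ in 𝓝[>] (0:ℝ), deriv (f i) t - ε < (f i (t+τ) - f i t)/τ :=
        (tendsto_quot' (hf i)).eventually_const_lt (by linarith)
      have hle : G t ≤ f i t := ciInf_le (hbdd t) i
      rcases eq_or_lt_of_le hle with heq | hlt
      · have hd : c ≤ deriv (f i) t := hc i heq
        filter_upwards [hq, self_mem_nhdsWithin] with τ hq (hτ : (0:ℝ) < τ)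
        rw [lt_div_iff₀ hτ] at hq
        nlinarith
      · set d := deriv (f i) t with hd
        have hr : 0 < (f i t - G t)/(|c - d| + 1) := by
          apply div_pos (by linarith) (by positivity)
        have hsmall : ∀ᶠ τ in 𝓝[>] (0:ℝ), τ < (f i t - G t)/(|c - d| + 1) :=
          eventually_nhdsWithin_of_eventually_nhds (eventually_lt_nhds hr)
        filter_upwards [hq, hsmall, self_mem_nhdsWithin] with τ hq hsm (hτ : (0:ℝ) < τ)
        rw [lt_div_iff₀ hτ] at hq
        have habs : (c - d) * τ ≤ f i t - G t := by
          have h1 : (c - d) * τ ≤ |c - d| * τ := by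
            apply mul_le_mul_of_nonneg_right (le_abs_self _) hτ.le
          have h2 : |c - d| * τ ≤ (|c - d| + 1) * τ := by nlinarith
          have h3 : (|c - d| + 1) * τ < f i t - G t := by
            rw [mul_comm, ← lt_div_iff₀ (by positivity)]
            exact hsm
          linarith
        nlinarith
    have hlbq : ∀ᶠ τ in 𝓝[>] (0:ℝ), c - ε ≤ (G (t+τ) - G t)/τ := by
      filter_upwards [eventually_all.2 key, self_mem_nhdsWithin] with τ hall (hτ : (0:ℝ) < τ)
      have : G t + (c - ε)*τ ≤ G (t+τ) := le_ciInf fun i => hall i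
      rw [le_div_iff₀ hτ]; linarith
    have := le_limsup_of_frequently_le hlbq.frequently hbound
    linarith
  exact le_of_forall_pos_le_add hstep

private lemma ciSup_sum_max {n : ℕ} [Nonempty (Fin n)] (g : Fin n ⊕ Fin n → ℝ) :
    (⨆ p, g p) = max (⨆ i, g (.inl i)) (⨆ i, g (.inr i)) := by
  apply le_antisymm
  · refine ciSup_le ?_
    rintro (i | i)
    · exact le_max_of_le_left (le_ciSup (f := fun i => g (Sum.inl i)) (Set.finite_range _).bddAbove i)
    · exact le_max_of_le_right (le_ciSup (f := fun i => g (Sum.inr i)) (Set.finite_range _).bddAbove i)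
  · exact max_le (ciSup_le fun i => le_ciSup (Set.finite_range _).bddAbove (Sum.inl i))
      (ciSup_le fun i => le_ciSup (Set.finite_range _).bddAbove (Sum.inr i))

private lemma ciInf_sum_min {n : ℕ} [Nonempty (Fin n)] (g : Fin n ⊕ Fin n → ℝ) :
    (⨅ p, g p) = min (⨅ i, g (.inl i)) (⨅ i, g (.inr i)) := by
  apply le_antisymm
  · exact le_min (le_ciInf fun i => ciInf_le (Set.finite_range _).bddBelow (Sum.inl i))
      (le_ciInf fun i => ciInf_le (Set.finite_range _).bddBelow (Sum.inr i))
  · refine le_ciInf ?_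
    rintro (i | i)
    · exact min_le_of_left_le (ciInf_le (f := fun i => g (Sum.inl i)) (Set.finite_range _).bddBelow i)
    · exact min_le_of_right_le (ciInf_le (f := fun i => g (Sum.inr i)) (Set.finite_range _).bddBelow i)

/-- For the transformed system `ẋᵢ = -(k/2)(xᵢ - x_{n+i})`,
`ẋ_{n+i} = -(k/2)(x_{n+i} - xᵢ) - (2/k)∑ⱼ aᵢⱼ(t)(x_{n+i} - x_{n+j}) + δᵢ(t)` with
nonnegative weights, the upper Dini derivatives of the maximum `ℏ` and minimum `ℓ`
of all `2n` states satisfy `D⁺ℏ(t) ≤ maxᵢ |δᵢ(t)|` and `D⁺ℓ(t) ≥ -maxᵢ |δᵢ(t)|`.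
Here `y i = xᵢ` and `z i = x_{n+i}`. -/
theorem statement5
    (n : ℕ) (hn : 0 < n) (k : ℝ) (hk : 0 < k) (t₀ : ℝ)
    (y z : Fin n → ℝ → ℝ)
    (a : Fin n → Fin n → ℝ → ℝ) (δ : Fin n → ℝ → ℝ)
    (hy : ∀ i, Differentiable ℝ (y i)) (hz : ∀ i, Differentiable ℝ (z i))
    (ha : ∀ i j t, 0 ≤ a i j t)
    (hdy : ∀ i t, t₀ ≤ t → deriv (y i) t = -(k / 2) * (y i t - z i t))
    (hdz : ∀ i t, t₀ ≤ t → deriv (z i) t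
      = -(k / 2) * (z i t - y i t)
        - (2 / k) * ∑ j, a i j t * (z i t - z j t) + δ i t)
    (t : ℝ) (ht : t₀ ≤ t) :
    Filter.limsup
        (fun τ => ((max (⨆ i, y i (t + τ)) (⨆ i, z i (t + τ)))
            - max (⨆ i, y i t) (⨆ i, z i t)) / τ)
        (𝓝[>] (0 : ℝ))
      ≤ ⨆ i, |δ i t| ∧
    -(⨆ i, |δ i t|) ≤
      Filter.limsup
        (fun τ => ((min (⨅ i, y i (t + τ)) (⨅ i, z i (t + τ)))
            - min (⨅ i, y i t) (⨅ i, z i t)) / τ)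
        (𝓝[>] (0 : ℝ)) := by
  haveI : Nonempty (Fin n) := Fin.pos_iff_nonempty.1 hn
  set f : Fin n ⊕ Fin n → ℝ → ℝ := Sum.elim y z with hf
  have hdiff : ∀ p, DifferentiableAt ℝ (f p) t := by
    rintro (i | i)
    · exact (hy i).differentiableAt
    · exact (hz i).differentiableAt
  set C : ℝ := ⨆ i, |δ i t| with hC
  have hCbdd : BddAbove (Set.range fun i => |δ i t|) := (Set.finite_range _).bddAbove
  have hC0 : 0 ≤ C := le_trans (abs_nonneg _) (le_ciSup hCbdd (Classical.arbitrary _))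
  have hCδ : ∀ i, δ i t ≤ C := fun i => le_trans (le_abs_self _) (le_ciSup hCbdd i)
  have hCδ' : ∀ i, -C ≤ δ i t := fun i => le_trans (neg_le_neg (le_ciSup hCbdd i)) (neg_abs_le _)
  have hzbddA : ∀ s, BddAbove (Set.range fun i => z i s) := fun s => (Set.finite_range _).bddAbove
  have hzbddB : ∀ s, BddBelow (Set.range fun i => z i s) := fun s => (Set.finite_range _).bddBelow
  constructor
  · have hmax := dini_max_le f t hdiff C ?_
    · have heq : ∀ s : ℝ, (⨆ p, f p s)
          = max (⨆ i, y i s) (⨆ i, z i s) := fun s => ciSup_sum_max (fun p => f p s)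
      simpa only [heq] using hmax
    · rintro (i | i) hp
      · rw [ciSup_sum_max] at hp
        have hzy : z i t ≤ y i t := by
          have h1 : z i t ≤ ⨆ j, f (Sum.inr j) t := le_ciSup (hzbddA t) i
          have h2 : (⨆ j, f (Sum.inr j) t) ≤ f (Sum.inl i) t := le_trans (le_max_right _ _) hp.le
          exact le_trans h1 h2
        have : deriv (f (Sum.inl i)) t = deriv (y i) t := rfl
        rw [this, hdy i t ht]
        nlinarith
      · rw [ciSup_sum_max] at hp
        have hyz : y i t ≤ z i t := by
          have h1 : y i t ≤ ⨆ j, f (Sum.inl j) t := le_ciSup (f := fun j => f (Sum.inl j) t) ((Set.finite_range _).bddAbove) i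
          exact le_trans h1 (le_trans (le_max_left _ _) hp.le)
        have hzz : ∀ j, z j t ≤ z i t := by
          intro j
          have h1 : z j t ≤ ⨆ j', f (Sum.inr j') t := le_ciSup (hzbddA t) j
          exact le_trans h1 (le_trans (le_max_right _ _) hp.le)
        have hder : deriv (f (Sum.inr i)) t = deriv (z i) t := rfl
        rw [hder, hdz i t ht]
        have hsum : 0 ≤ ∑ j, a i j t * (z i t - z j t) :=
          Finset.sum_nonneg fun j _ => mul_nonneg (ha i j t) (by linarith [hzz j])
        have h1 : 0 ≤ (k/2) * (z i t - y i t) := mul_nonneg (by linarith) (by linarith)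
        have h2 : 0 ≤ (2/k) * ∑ j, a i j t * (z i t - z j t) :=
          mul_nonneg (by positivity) hsum
        have := hCδ i
        linarith
  · have hmin := dini_min_ge f t hdiff (-C) ?_
    · have heq : ∀ s : ℝ, (⨅ p, f p s)
          = min (⨅ i, y i s) (⨅ i, z i s) := fun s => ciInf_sum_min (fun p => f p s)
      simpa only [heq] using hmin
    · rintro (i | i) hp
      · rw [ciInf_sum_min] at hp
        have hzy : y i t ≤ z i t := by
          have h2 : f (Sum.inl i) t ≤ ⨅ j, f (Sum.inr j) t := hp.ge.trans (min_le_right _ _)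
          exact le_trans h2 (ciInf_le (hzbddB t) i)
        have : deriv (f (Sum.inl i)) t = deriv (y i) t := rfl
        rw [this, hdy i t ht]
        nlinarith
      · rw [ciInf_sum_min] at hp
        have hyz : z i t ≤ y i t := by
          have h1 : (⨅ j, f (Sum.inl j) t) ≤ y i t := ciInf_le (f := fun j => f (Sum.inl j) t) ((Set.finite_range _).bddBelow) i
          exact le_trans (hp.ge.trans (min_le_left _ _)) h1
        have hzz : ∀ j, z i t ≤ z j t := by
          intro j
          have h1 : (⨅ j', f (Sum.inr j') t) ≤ z j t := ciInf_le (hzbddB t) j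
          exact le_trans (hp.ge.trans (min_le_right _ _)) h1
        have hder : deriv (f (Sum.inr i)) t = deriv (z i) t := rfl
        rw [hder, hdz i t ht]
        have hsum : ∑ j, a i j t * (z i t - z j t) ≤ 0 :=
          Finset.sum_nonpos fun j _ => mul_nonpos_of_nonneg_of_nonpos (ha i j t) (by linarith [hzz j])
        have h1 : (k/2) * (z i t - y i t) ≤ 0 := mul_nonpos_of_nonneg_of_nonpos (by linarith) (by linarith)
        have h2 : (2/k) * ∑ j, a i j t * (z i t - z j t) ≤ 0 :=
          mul_nonpos_of_nonneg_of_nonpos (by positivity) hsum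
        have := hCδ' i
        linarith
end

section
/- Let X_1, …, X_n ⊆ ℝ^m be closed convex sets with X₀ = ∩_{i=1}^n X_i nonempty, and let G be a connected undirected graph on {1, …, n} with symmetric weights a_{ij} = a_{ji} > 0 for edges {i, j} ∈ E and a_{ij} = 0 otherwise. Suppose q_1, …, q_n ∈ ℝ^m satisfy, for every i, Σ_{j∈N_i} a_{ij}(q_i − q_j) + (q_i − P_{X_i}(q_i)) = 0. Then q_i = P_{X_i}(q_i) ∈ X_i for every i, and q_1 = q_2 = ⋯ = q_n; consequently, the common value lies in X₀. -/
open scoped BigOperators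

open RealInnerProductSpace

lemma proj_inner_le {H : Type*} [NormedAddCommGroup H] [InnerProductSpace ℝ H]
    {K : Set H} (hK : Convex ℝ K) {x p : H} (hp : p ∈ K)
    (hmin : ∀ y ∈ K, ‖x - p‖ ≤ ‖x - y‖) : ∀ y ∈ K, ⟪x - p, y - p⟫ ≤ 0 := by
  have : Nonempty K := ⟨⟨p, hp⟩⟩
  have h : ‖x - p‖ = ⨅ w : K, ‖x - w‖ := by
    refine le_antisymm (le_ciInf fun w => hmin w w.2) ?_
    exact ciInf_le (f := fun w : K => ‖x - (w : H)‖)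
      ⟨0, by rintro _ ⟨w, rfl⟩; exact norm_nonneg _⟩ ⟨p, hp⟩
  exact (norm_eq_iInf_iff_real_inner_le_zero hK hp).1 h

/-- If the equilibrium equations
`∑ⱼ aᵢⱼ(qᵢ - qⱼ) + (qᵢ - P_{Xᵢ}(qᵢ)) = 0` hold over a connected graph, then each
`qᵢ` equals its projection (so lies in `Xᵢ`), all the `qᵢ` coincide, and the common
value lies in the intersection `X₀ = ⋂ᵢ Xᵢ`. -/
theorem statement8
    (m n : ℕ) (hn : 0 < n)
    (X : Fin n → Set (EuclideanSpace ℝ (Fin m)))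
    (hXclosed : ∀ i, IsClosed (X i))
    (hXconvex : ∀ i, Convex ℝ (X i))
    (hX0ne : (⋂ i, X i).Nonempty)
    (P : Fin n → EuclideanSpace ℝ (Fin m) → EuclideanSpace ℝ (Fin m))
    (hPmem : ∀ i x, P i x ∈ X i)
    (hPproj : ∀ i x, ∀ y ∈ X i, ‖x - P i x‖ ≤ ‖x - y‖)
    (a : Fin n → Fin n → ℝ)
    (ha_symm : ∀ i j, a i j = a j i)
    (ha_nonneg : ∀ i j, 0 ≤ a i j)
    (ha_diag : ∀ i, a i i = 0)
    (hconn : (SimpleGraph.fromRel fun i j : Fin n => 0 < a i j).Connected)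
    (q : Fin n → EuclideanSpace ℝ (Fin m))
    (heq : ∀ i, (∑ j, a i j • (q i - q j)) + (q i - P i (q i)) = 0) :
    (∀ i, q i = P i (q i) ∧ q i ∈ X i) ∧ (∀ i j, q i = q j) ∧
    (∀ i, q i ∈ ⋂ j, X j) := by
  obtain ⟨xs, hxs⟩ := hX0ne
  have hxsi : ∀ i, xs ∈ X i := fun i => Set.mem_iInter.1 hxs i
  have hobtuse : ∀ i, ∀ y ∈ X i, ⟪q i - P i (q i), y - P i (q i)⟫ ≤ 0 :=
    fun i => proj_inner_le (hXconvex i) (hPmem i (q i)) (hPproj i (q i))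
  have hS : (∑ i, ∑ j, a i j * ⟪q i - q j, q i - xs⟫)
      + (∑ i, ⟪q i - P i (q i), q i - xs⟫) = 0 := by
    rw [← Finset.sum_add_distrib]
    refine Finset.sum_eq_zero fun i _ => ?_
    have h2 : ⟪(∑ j, a i j • (q i - q j)) + (q i - P i (q i)), q i - xs⟫ = (0 : ℝ) := by
      rw [heq i, inner_zero_left]
    rw [inner_add_left, sum_inner] at h2
    simp_rw [real_inner_smul_left] at h2
    exact h2
  have hswap : (∑ i, ∑ j, a i j * ⟪q i - q j, q i - xs⟫)
      = ∑ i, ∑ j, a i j * ⟪q i - q j, xs - q j⟫ := by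
    rw [Finset.sum_comm]
    refine Finset.sum_congr rfl fun j _ => Finset.sum_congr rfl fun i _ => ?_
    rw [ha_symm j i]
    congr 1
    rw [show q i - q j = -(q j - q i) by abel, show q i - xs = -(xs - q i) by abel,
      inner_neg_neg]
  have hT2 : 2 * (∑ i, ∑ j, a i j * ⟪q i - q j, q i - xs⟫)
      = ∑ i, ∑ j, a i j * ‖q i - q j‖ ^ 2 := by
    rw [two_mul]
    nth_rewrite 2 [hswap]
    rw [← Finset.sum_add_distrib]
    refine Finset.sum_congr rfl fun i _ => ?_
    rw [← Finset.sum_add_distrib]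
    refine Finset.sum_congr rfl fun j _ => ?_
    rw [← mul_add, ← inner_add_right, show (q i - xs) + (xs - q j) = q i - q j by abel,
      real_inner_self_eq_norm_sq]
  have hTnn : 0 ≤ ∑ i, ∑ j, a i j * ⟪q i - q j, q i - xs⟫ := by
    have h2 : 0 ≤ 2 * ∑ i, ∑ j, a i j * ⟪q i - q j, q i - xs⟫ := by
      rw [hT2]
      exact Finset.sum_nonneg fun i _ => Finset.sum_nonneg fun j _ =>
        mul_nonneg (ha_nonneg i j) (by positivity)
    linarith
  have hUge : ∀ i, ‖q i - P i (q i)‖ ^ 2 ≤ ⟪q i - P i (q i), q i - xs⟫ := by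
    intro i
    have h1 := hobtuse i xs (hxsi i)
    have h3 : (⟪q i - P i (q i), q i - xs⟫ : ℝ)
        = ⟪q i - P i (q i), q i - P i (q i)⟫ - ⟪q i - P i (q i), xs - P i (q i)⟫ := by
      rw [← inner_sub_right]; congr 1; abel
    rw [h3, real_inner_self_eq_norm_sq]
    linarith
  have hUnn : (∑ i, ‖q i - P i (q i)‖ ^ 2) ≤ ∑ i, ⟪q i - P i (q i), q i - xs⟫ :=
    Finset.sum_le_sum fun i _ => hUge i
  have hEnn : 0 ≤ ∑ i, ‖q i - P i (q i)‖ ^ 2 :=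
    Finset.sum_nonneg fun i _ => by positivity
  have hT0 : (∑ i, ∑ j, a i j * ⟪q i - q j, q i - xs⟫) = 0 :=
    le_antisymm (by linarith) hTnn
  have hE0 : (∑ i, ‖q i - P i (q i)‖ ^ 2) = 0 := le_antisymm (by linarith) hEnn
  have hqP : ∀ i, q i = P i (q i) := by
    intro i
    have h4 := (Finset.sum_eq_zero_iff_of_nonneg (fun i _ => by positivity)).1 hE0 i
      (Finset.mem_univ i)
    have h5 : ‖q i - P i (q i)‖ = 0 := by
      have := sq_eq_zero_iff.1 h4; exact this
    rw [← sub_eq_zero]; exact norm_eq_zero.1 h5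
  have hTall : ∀ i j, a i j * ‖q i - q j‖ ^ 2 = 0 := by
    have h2 : (∑ i, ∑ j, a i j * ‖q i - q j‖ ^ 2) = 0 := by
      rw [← hT2, hT0]; ring
    intro i j
    have hi := (Finset.sum_eq_zero_iff_of_nonneg (fun i _ =>
      Finset.sum_nonneg fun j _ => mul_nonneg (ha_nonneg i j) (by positivity))).1 h2 i
      (Finset.mem_univ i)
    exact (Finset.sum_eq_zero_iff_of_nonneg (fun j _ =>
      mul_nonneg (ha_nonneg i j) (by positivity))).1 hi j (Finset.mem_univ j)
  have hadj : ∀ i j, 0 < a i j → q i = q j := by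
    intro i j hij
    have h6 := hTall i j
    have h2 : ‖q i - q j‖ ^ 2 = 0 := by
      rcases mul_eq_zero.1 h6 with h | h
      · exact absurd h (ne_of_gt hij)
      · exact h
    rw [← sub_eq_zero]
    exact norm_eq_zero.1 (sq_eq_zero_iff.1 h2)
  have hall : ∀ i j, q i = q j := by
    intro i j
    obtain ⟨w⟩ := hconn.preconnected i j
    induction w with
    | nil => rfl
    | cons h p ih =>
      rename_i u v _
      have hadjuv := (SimpleGraph.fromRel_adj _ _ _).1 h
      have huv : q u = q v := by
        rcases hadjuv.2 with h' | h'
        · exact hadj _ _ h'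
        · exact (hadj _ _ h').symm
      rw [huv]; exact ih
  refine ⟨fun i => ⟨hqP i, (hqP i) ▸ hPmem i (q i)⟩, hall, fun i => Set.mem_iInter.2 fun j => ?_⟩
  rw [hall i j]
  exact (hqP j) ▸ hPmem j (q j)
end

section
/- Consider n agents with Lagrangian dynamics M_i(q_i)q̈_i + C_i(q_i, q̇_i)q̇_i = τ_i, q_i(t) ∈ ℝ^m, under the control law τ_i = −k q̇_i − (q_i − P_{X_i}(q_i)) − Σ_{j∈N_i} a_{ij}(q_i − q_j), with k > 0, over a fixed undirected communication graph with symmetric weights a_{ij} = a_{ji} ≥ 0, where X_1, …, X_n are nonempty closed convex sets. Define V(t) = (1/2) Σ_{i=1}^n q̇_i(t)ᵀ M_i(q_i(t)) q̇_i(t) + (1/4) Σ_{i=1}^n Σ_{j∈N_i} a_{ij} ‖q_i(t) − q_j(t)‖² + (1/2) Σ_{i=1}^n ‖q_i(t) − P_{X_i}(q_i(t))‖². Then along every C² solution, V is differentiable with dV/dt = −k Σ_{i=1}^n ‖q̇_i(t)‖² ≤ 0. -/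
open scoped RealInnerProductSpace

/-!
Along a solution, `M q̈ + C q̇ = τ` and the skew-symmetry of `Ṁ - 2C` give
`d/dt (½ q̇ᵀ M q̇) = ⟪τ, q̇⟫`. The squared distance to a convex set is differentiable with
gradient `2 (x - P x)`, and for symmetric weights the disagreement term has derivative
`∑ᵢ ⟪∑ⱼ aᵢⱼ (qᵢ - qⱼ), q̇ᵢ⟫`. These two contributions cancel the corresponding parts of the
control `τᵢ`, leaving `-k ∑ᵢ ‖q̇ᵢ‖²`.
-/

variable {E : Type*} [NormedAddCommGroup E] [InnerProductSpace ℝ E]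

section MetricProjection

variable {S : Set E} {P : E → E}

theorem real_inner_sub_proj_le_zero (hS : Convex ℝ S) (hmem : ∀ x, P x ∈ S)
    (hproj : ∀ x, ∀ y ∈ S, ‖x - P x‖ ≤ ‖x - y‖) (x : E) :
    ∀ y ∈ S, ⟪x - P x, y - P x⟫ ≤ 0 := by
  have : Nonempty S := ⟨⟨P x, hmem x⟩⟩
  refine (norm_eq_iInf_iff_real_inner_le_zero hS (hmem x)).1 (le_antisymm ?_ ?_)
  · exact le_ciInf fun y => hproj x y y.2
  · exact ciInf_le ⟨0, Set.forall_mem_range.2 fun _ => norm_nonneg _⟩ (⟨P x, hmem x⟩ : S)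

theorem real_inner_sub_proj_sub_sub_proj_nonneg (hS : Convex ℝ S) (hmem : ∀ x, P x ∈ S)
    (hproj : ∀ x, ∀ y ∈ S, ‖x - P x‖ ≤ ‖x - y‖) (x y : E) :
    0 ≤ ⟪(x - P x) - (y - P y), x - y⟫ := by
  have hx := real_inner_sub_proj_le_zero hS hmem hproj x (P y) (hmem y)
  have hy := real_inner_sub_proj_le_zero hS hmem hproj y (P x) (hmem x)
  have hsplit : x - y = ((x - P x) - (y - P y)) + -(P y - P x) := by abel
  have hswap : P x - P y = -(P y - P x) := by abel
  rw [hswap, inner_neg_right] at hy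
  rw [hsplit, inner_add_right, real_inner_self_eq_norm_sq, inner_neg_right, inner_sub_left]
  nlinarith [sq_nonneg ‖(x - P x) - (y - P y)‖]

theorem abs_norm_sub_proj_sq_sub_le (hS : Convex ℝ S) (hmem : ∀ x, P x ∈ S)
    (hproj : ∀ x, ∀ y ∈ S, ‖x - P x‖ ≤ ‖x - y‖) (x h : E) :
    |‖x + h - P (x + h)‖ ^ 2 - ‖x - P x‖ ^ 2 - 2 * ⟪x - P x, h⟫| ≤ ‖h‖ ^ 2 := by
  -- `P x` competes with `P (x + h)` at `x + h` and vice versa; monotonicity of `id - P`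
  -- then replaces `x + h - P (x + h)` by `x - P x` in the lower bound.
  have hupper : ‖x + h - P (x + h)‖ ^ 2 ≤ ‖(x - P x) + h‖ ^ 2 := by
    rw [← add_sub_right_comm]
    exact pow_le_pow_left₀ (norm_nonneg _) (hproj _ _ (hmem x)) 2
  have hlower : ‖x - P x‖ ^ 2 ≤ ‖(x + h - P (x + h)) - h‖ ^ 2 := by
    rw [sub_right_comm, add_sub_cancel_right]
    exact pow_le_pow_left₀ (norm_nonneg _) (hproj _ _ (hmem _)) 2
  have hmono := real_inner_sub_proj_sub_sub_proj_nonneg hS hmem hproj (x + h) x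
  rw [add_sub_cancel_left, inner_sub_left] at hmono
  rw [norm_add_sq_real] at hupper
  rw [norm_sub_sq_real (x + h - P (x + h))] at hlower
  rw [abs_le]
  constructor <;> linarith

theorem hasFDerivAt_norm_sub_proj_sq (hS : Convex ℝ S) (hmem : ∀ x, P x ∈ S)
    (hproj : ∀ x, ∀ y ∈ S, ‖x - P x‖ ≤ ‖x - y‖) (x : E) :
    HasFDerivAt (fun y => ‖y - P y‖ ^ 2) ((2 : ℝ) • innerSL ℝ (x - P x)) x := by
  rw [hasFDerivAt_iff_isLittleO_nhds_zero]
  refine Asymptotics.IsBigO.trans_isLittleO ?_ (Asymptotics.isLittleO_norm_pow_id one_lt_two)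
  refine Asymptotics.IsBigO.of_bound 1 (Filter.Eventually.of_forall fun h => ?_)
  rw [smul_apply, innerSL_apply_apply, smul_eq_mul, Real.norm_eq_abs,
    norm_pow, norm_norm, one_mul]
  exact abs_norm_sub_proj_sq_sub_le hS hmem hproj x h

end MetricProjection

theorem hasDerivAt_kinetic_energy {M : ℝ → E →L[ℝ] E} {M' C : E →L[ℝ] E} {v : ℝ → E}
    {v' : E} {t : ℝ} (hM : HasDerivAt M M' t) (hv : HasDerivAt v v' t)
    (hsymm : ∀ x y, ⟪M t x, y⟫ = ⟪x, M t y⟫)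
    (hskew : ∀ x y, ⟪(M' - (2 : ℝ) • C) x, y⟫ = -⟪(M' - (2 : ℝ) • C) y, x⟫) :
    HasDerivAt (fun s => ⟪M s (v s), v s⟫) (2 * ⟪M t v' + C (v t), v t⟫) t := by
  refine ((hM.clm_apply hv).inner ℝ hv).congr_deriv ?_
  have hCoriolis : ⟪M' (v t), v t⟫ = 2 * ⟪C (v t), v t⟫ := by
    have h := hskew (v t) (v t)
    rw [sub_apply, smul_apply, inner_sub_left, real_inner_smul_left] at h
    linarith
  rw [inner_add_left, hCoriolis, hsymm, real_inner_comm (M t v'), inner_add_left]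
  ring

theorem sum_sum_mul_inner_sub_sub {ι : Type*} [Fintype ι] {a : ι → ι → ℝ}
    (ha : ∀ i j, a i j = a j i) (x v : ι → E) :
    ∑ i, ∑ j, a i j * ⟪x i - x j, v i - v j⟫ = 2 * ∑ i, ⟪∑ j, a i j • (x i - x j), v i⟫ := by
  have hswap : ∑ i, ∑ j, a i j * ⟪x i - x j, v j⟫ = -∑ i, ∑ j, a i j * ⟪x i - x j, v i⟫ := by
    rw [Finset.sum_comm]
    simp only [← Finset.sum_neg_distrib]
    refine Finset.sum_congr rfl fun i _ => Finset.sum_congr rfl fun j _ => ?_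
    rw [ha, ← neg_sub, inner_neg_left, mul_neg]
  simp only [inner_sub_right, mul_sub, Finset.sum_sub_distrib, hswap, sum_inner,
    real_inner_smul_left]
  ring

theorem hasDerivAt_graph_disagreement {ι : Type*} [Fintype ι] {a : ι → ι → ℝ}
    (ha : ∀ i j, a i j = a j i) {x : ι → ℝ → E} {v : ι → E} {t : ℝ}
    (hx : ∀ i, HasDerivAt (x i) (v i) t) :
    HasDerivAt (fun s => (1 / 4) * ∑ i, ∑ j, a i j * ‖x i s - x j s‖ ^ 2)
      (∑ i, ⟪∑ j, a i j • (x i t - x j t), v i⟫) t := by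
  have hterm : ∀ i j, HasDerivAt (fun s => a i j * ‖x i s - x j s‖ ^ 2)
      (a i j * (2 * ⟪x i t - x j t, v i - v j⟫)) t := fun i j =>
    (((hx i).sub (hx j)).norm_sq).const_mul (a i j)
  refine ((HasDerivAt.fun_sum fun i _ => HasDerivAt.fun_sum fun j _ => hterm i j).const_mul
    (1 / 4 : ℝ)).congr_deriv ?_
  have := sum_sum_mul_inner_sub_sub ha (fun i => x i t) v
  simp only [mul_left_comm (a _ _) 2, ← Finset.mul_sum] at this ⊢
  linarith

theorem statement15_general
    (m n : ℕ)
    (X : Fin n → Set (EuclideanSpace ℝ (Fin m)))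
    (hXconvex : ∀ i, Convex ℝ (X i))
    (P : Fin n → EuclideanSpace ℝ (Fin m) → EuclideanSpace ℝ (Fin m))
    (hPmem : ∀ i x, P i x ∈ X i)
    (hPproj : ∀ i x, ∀ y ∈ X i, ‖x - P i x‖ ≤ ‖x - y‖)
    (a : Fin n → Fin n → ℝ)
    (ha_symm : ∀ i j, a i j = a j i)
    (k : ℝ) (hk : 0 < k)
    (M : Fin n → EuclideanSpace ℝ (Fin m) →
      EuclideanSpace ℝ (Fin m) →L[ℝ] EuclideanSpace ℝ (Fin m))
    (Cc : Fin n → EuclideanSpace ℝ (Fin m) → EuclideanSpace ℝ (Fin m) →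
      EuclideanSpace ℝ (Fin m) →L[ℝ] EuclideanSpace ℝ (Fin m))
    (hMsymm : ∀ i x v w, ⟪M i x v, w⟫ = ⟪v, M i x w⟫)
    (q : Fin n → ℝ → EuclideanSpace ℝ (Fin m))
    (hq : ∀ i, ContDiff ℝ 2 (q i))
    (hMdiff : ∀ i, Differentiable ℝ fun s => M i (q i s))
    (hskew : ∀ i t v w,
      ⟪(deriv (fun s => M i (q i s)) t - (2 : ℝ) • Cc i (q i t) (deriv (q i) t)) v, w⟫
        = -⟪(deriv (fun s => M i (q i s)) t - (2 : ℝ) • Cc i (q i t) (deriv (q i) t)) w, v⟫)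
    (hdyn : ∀ i t,
      M i (q i t) (deriv (deriv (q i)) t) + Cc i (q i t) (deriv (q i) t) (deriv (q i) t)
        = -k • deriv (q i) t - (q i t - P i (q i t)) - ∑ j, a i j • (q i t - q j t)) :
    ∀ t : ℝ,
      HasDerivAt (fun s =>
          (1 / 2) * ∑ i, ⟪M i (q i s) (deriv (q i) s), deriv (q i) s⟫
          + (1 / 4) * ∑ i, ∑ j, a i j * ‖q i s - q j s‖ ^ 2
          + (1 / 2) * ∑ i, ‖q i s - P i (q i s)‖ ^ 2)
        (-k * ∑ i, ‖deriv (q i) t‖ ^ 2) t ∧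
      -k * ∑ i, ‖deriv (q i) t‖ ^ 2 ≤ 0 := by
  intro t
  have hq' : ∀ i, HasDerivAt (q i) (deriv (q i) t) t := fun i =>
    ((hq i).differentiable two_ne_zero t).hasDerivAt
  have hq'' : ∀ i, HasDerivAt (deriv (q i)) (deriv (deriv (q i)) t) t := fun i =>
    (((hq i).iterate_deriv' 1 1).differentiable one_ne_zero t).hasDerivAt
  have hkinetic := fun i => hasDerivAt_kinetic_energy ((hMdiff i) t).hasDerivAt (hq'' i)
    (hMsymm i (q i t)) (hskew i t)
  have hgraph := hasDerivAt_graph_disagreement ha_symm hq'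
  have hdist := fun i => (hasFDerivAt_norm_sub_proj_sq (hXconvex i) (hPmem i) (hPproj i)
    (q i t)).comp_hasDerivAt t (hq' i)
  refine ⟨((((HasDerivAt.fun_sum fun i _ => hkinetic i).const_mul (1 / 2)).add hgraph).add
    ((HasDerivAt.fun_sum fun i _ => hdist i).const_mul (1 / 2))).congr_deriv ?_, ?_⟩
  · simp only [hdyn, smul_apply, innerSL_apply_apply, smul_eq_mul,
      inner_sub_left, real_inner_smul_left, real_inner_self_eq_norm_sq, Finset.mul_sum,
      ← Finset.sum_add_distrib]
    exact Finset.sum_congr rfl fun i _ => by ring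
  · exact mul_nonpos_of_nonpos_of_nonneg (neg_nonpos.2 hk.le)
      (Finset.sum_nonneg fun i _ => sq_nonneg _)

/-- Along every C² solution of the Lagrangian closed loop with
control `τᵢ = -k q̇ᵢ - (qᵢ - P_{Xᵢ}(qᵢ)) - ∑ⱼ aᵢⱼ(qᵢ - qⱼ)`, the Lyapunov function
`V = (1/2)∑ᵢ q̇ᵢᵀMᵢq̇ᵢ + (1/4)∑ᵢ∑ⱼ aᵢⱼ‖qᵢ - qⱼ‖² + (1/2)∑ᵢ ‖qᵢ - P_{Xᵢ}(qᵢ)‖²`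
is differentiable with `dV/dt = -k ∑ᵢ ‖q̇ᵢ‖² ≤ 0`. -/
theorem statement15
    (m n : ℕ)
    (X : Fin n → Set (EuclideanSpace ℝ (Fin m)))
    (hXclosed : ∀ i, IsClosed (X i))
    (hXconvex : ∀ i, Convex ℝ (X i))
    (hXne : ∀ i, (X i).Nonempty)
    (P : Fin n → EuclideanSpace ℝ (Fin m) → EuclideanSpace ℝ (Fin m))
    (hPmem : ∀ i x, P i x ∈ X i)
    (hPproj : ∀ i x, ∀ y ∈ X i, ‖x - P i x‖ ≤ ‖x - y‖)
    (a : Fin n → Fin n → ℝ)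
    (ha_symm : ∀ i j, a i j = a j i)
    (ha_nonneg : ∀ i j, 0 ≤ a i j)
    (ha_diag : ∀ i, a i i = 0)
    (k : ℝ) (hk : 0 < k)
    (M : Fin n → EuclideanSpace ℝ (Fin m) →
      EuclideanSpace ℝ (Fin m) →L[ℝ] EuclideanSpace ℝ (Fin m))
    (Cc : Fin n → EuclideanSpace ℝ (Fin m) → EuclideanSpace ℝ (Fin m) →
      EuclideanSpace ℝ (Fin m) →L[ℝ] EuclideanSpace ℝ (Fin m))
    (hMsymm : ∀ i x v w, ⟪M i x v, w⟫ = ⟪v, M i x w⟫)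
    (hMpos : ∀ i x v, v ≠ 0 → 0 < ⟪M i x v, v⟫)
    (hMcont : ∀ i, Continuous (M i))
    (hCcont : ∀ i, Continuous fun p :
      EuclideanSpace ℝ (Fin m) × EuclideanSpace ℝ (Fin m) => Cc i p.1 p.2)
    (q : Fin n → ℝ → EuclideanSpace ℝ (Fin m))
    (hq : ∀ i, ContDiff ℝ 2 (q i))
    (hMdiff : ∀ i, Differentiable ℝ fun s => M i (q i s))
    (hskew : ∀ i t v w,
      ⟪(deriv (fun s => M i (q i s)) t - (2 : ℝ) • Cc i (q i t) (deriv (q i) t)) v, w⟫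
        = -⟪(deriv (fun s => M i (q i s)) t - (2 : ℝ) • Cc i (q i t) (deriv (q i) t)) w, v⟫)
    (hdyn : ∀ i t,
      M i (q i t) (deriv (deriv (q i)) t) + Cc i (q i t) (deriv (q i) t) (deriv (q i) t)
        = -k • deriv (q i) t - (q i t - P i (q i t)) - ∑ j, a i j • (q i t - q j t)) :
    ∀ t : ℝ,
      HasDerivAt (fun s =>
          (1 / 2) * ∑ i, ⟪M i (q i s) (deriv (q i) s), deriv (q i) s⟫
          + (1 / 4) * ∑ i, ∑ j, a i j * ‖q i s - q j s‖ ^ 2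
          + (1 / 2) * ∑ i, ‖q i s - P i (q i s)‖ ^ 2)
        (-k * ∑ i, ‖deriv (q i) t‖ ^ 2) t ∧
      -k * ∑ i, ‖deriv (q i) t‖ ^ 2 ≤ 0 :=
  statement15_general m n X hXconvex P hPmem hPproj a ha_symm k hk M Cc hMsymm q hq hMdiff hskew
    hdyn
end

section
/- Consider n agents whose closed-loop dynamics are q̈_i(t) = −k q̇_i(t) − Σ_{j=1}^n a_{ij}(t)(q_i(t) − q_j(t)) − (q_i(t) − P_{X_i}(q_i(t))), q_i(t) ∈ ℝ^m, where X_1, …, X_n are closed convex sets with X₀ = ∩_{i=1}^n X_i nonempty, q₀ ∈ X₀, the measurable weights satisfy a_{ij}(t) = a_{ji}(t) and 0 ≤ a_{ij}(t) ≤ a^*, and k > 2 + (n−1)a^*/2. Define V(t) = (1/2) Σ_i ‖q̇_i(t)‖² + Σ_i ⟨q_i(t) − q₀, q̇_i(t)⟩ + (k/2) Σ_i ‖q_i(t) − q₀‖² + (1/2) Σ_i ‖q_i(t) − P_{X_i}(q_i(t))‖². Then along every C² solution, at every time t, dV/dt ≤ −Σ_{i=1}^n ‖q_i(t)‖²_{X_i}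 − Σ_{i=1}^n ‖q̇_i(t)‖² ≤ 0. -/
/-!
Differentiating `V` and substituting the dynamics leaves, for each agent,
`(1 - k)‖q̇ᵢ‖² - ⟪q̇ᵢ, Lᵢ⟫ - ⟪qᵢ - q₀, Lᵢ⟫ - ⟪qᵢ - q₀, qᵢ - P(qᵢ)⟫` with `Lᵢ = ∑ⱼ aᵢⱼ (qᵢ - qⱼ)`.
By symmetry of the weights, `∑ᵢ ⟪qᵢ - q₀, Lᵢ⟫ = ½ ∑ᵢⱼ aᵢⱼ ‖qᵢ - qⱼ‖²`, and this absorbs the cross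
terms `⟪q̇ᵢ, Lᵢ⟫` by Young's inequality at the price of `(n - 1) a*/2 ‖q̇ᵢ‖²`. Since `q₀ ∈ Xᵢ`, the
obtuse-angle property of the projection gives `⟪qᵢ - q₀, qᵢ - P(qᵢ)⟫ ≥ ‖qᵢ - P(qᵢ)‖²`, and
`k > 2 + (n - 1) a*/2` leaves at most `-‖q̇ᵢ‖²`. The term `‖x - P x‖²` is differentiable with
gradient `2 (x - P x)` because `P` is 1-Lipschitz.
-/

open scoped RealInnerProductSpace BigOperators

section NearestPoint

variable {F : Type*} [NormedAddCommGroup F]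

def IsNearestPoint (S : Set F) (x p : F) : Prop :=
  p ∈ S ∧ ∀ y ∈ S, ‖x - p‖ ≤ ‖x - y‖

namespace IsNearestPoint

variable {S : Set F} {x p : F}

theorem norm_sub_eq_iInf (h : IsNearestPoint S x p) : ‖x - p‖ = ⨅ y : S, ‖x - y‖ := by
  have : Nonempty S := ⟨⟨p, h.1⟩⟩
  refine le_antisymm (le_ciInf fun y => h.2 y y.2) (ciInf_le ⟨0, ?_⟩ (⟨p, h.1⟩ : S))
  rintro _ ⟨y, rfl⟩
  positivity

theorem norm_sub_eq_infDist (h : IsNearestPoint S x p) : ‖x - p‖ = Metric.infDist x S := by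
  simp only [h.norm_sub_eq_iInf, Metric.infDist_eq_iInf, dist_eq_norm]

variable [InnerProductSpace ℝ F]

theorem inner_sub_nonpos (hS : Convex ℝ S) (h : IsNearestPoint S x p) {y : F} (hy : y ∈ S) :
    ⟪x - p, y - p⟫ ≤ 0 :=
  (norm_eq_iInf_iff_real_inner_le_zero hS h.1).mp h.norm_sub_eq_iInf y hy

theorem norm_sub_sq_le_inner (hS : Convex ℝ S) (h : IsNearestPoint S x p) {c : F} (hc : c ∈ S) :
    ‖x - p‖ ^ 2 ≤ ⟪x - c, x - p⟫ := by
  have hsplit : ⟪x - c, x - p⟫ = ‖x - p‖ ^ 2 - ⟪x - p, c - p⟫ := by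
    rw [← real_inner_self_eq_norm_sq, ← inner_sub_right, real_inner_comm]
    congr 1
    abel
  linarith [h.inner_sub_nonpos hS hc]

theorem norm_sub_le (hS : Convex ℝ S) {x' p' : F} (h : IsNearestPoint S x p)
    (h' : IsNearestPoint S x' p') : ‖p - p'‖ ≤ ‖x - x'‖ := by
  have hsq : ‖p - p'‖ ^ 2 ≤ ⟪x - x', p - p'⟫ := by
    have hsplit : ⟪x - x', p - p'⟫ - ‖p - p'‖ ^ 2 = -⟪x - p, p' - p⟫ - ⟪x' - p', p - p'⟫ := by
      rw [← real_inner_self_eq_norm_sq]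
      simp only [inner_sub_left, inner_sub_right]
      ring
    linarith [h.inner_sub_nonpos hS h'.1, h'.inner_sub_nonpos hS h.1]
  nlinarith [real_inner_le_norm (x - x') (p - p'), norm_nonneg (p - p'), norm_nonneg (x - x')]

end IsNearestPoint

variable [InnerProductSpace ℝ F]

theorem hasFDerivAt_norm_sub_nearestPoint_sq {S : Set F} (hS : Convex ℝ S) {P : F → F}
    (hP : ∀ x, IsNearestPoint S x (P x)) (x : F) :
    HasFDerivAt (fun y => ‖y - P y‖ ^ 2) ((2 : ℝ) • innerSL ℝ (x - P x)) x := by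
  rw [hasFDerivAt_iff_isLittleO_nhds_zero]
  refine Asymptotics.IsBigO.trans_isLittleO ?_ (Asymptotics.isLittleO_norm_pow_id one_lt_two)
  refine Asymptotics.IsBigO.of_bound 5 (Filter.Eventually.of_forall fun h => ?_)
  set u := x - P x with hu
  set w := x + h - P (x + h) with hw
  -- Comparing with the competitors `P x` for `x + h` and `P (x + h)` for `x` sandwiches the increment.
  have hupper : ‖w‖ ^ 2 ≤ ‖u + h‖ ^ 2 := by
    have : x + h - P x = u + h := by rw [hu]; abel
    exact pow_le_pow_left₀ (norm_nonneg _) (this ▸ (hP (x + h)).2 _ (hP x).1) 2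
  have hlower : ‖u‖ ^ 2 ≤ ‖w - h‖ ^ 2 := by
    have : x - P (x + h) = w - h := by rw [hw]; abel
    exact pow_le_pow_left₀ (norm_nonneg _) (this ▸ (hP x).2 _ (hP (x + h)).1) 2
  have hwu : ‖w - u‖ ≤ 2 * ‖h‖ := by
    have hP_lip : ‖P (x + h) - P x‖ ≤ ‖h‖ := by
      simpa using (hP (x + h)).norm_sub_le hS (hP x)
    have : w - u = h - (P (x + h) - P x) := by rw [hw, hu]; abel
    rw [this]
    linarith [norm_sub_le h (P (x + h) - P x)]
  have hinner : |⟪w - u, h⟫| ≤ 2 * ‖h‖ ^ 2 := by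
    calc |⟪w - u, h⟫| ≤ ‖w - u‖ * ‖h‖ := abs_real_inner_le_norm _ _
      _ ≤ 2 * ‖h‖ ^ 2 := by nlinarith [norm_nonneg h]
  have hwh : ⟪w, h⟫ = ⟪u, h⟫ + ⟪w - u, h⟫ := by rw [← inner_add_left, add_sub_cancel]
  have happly : ((2 : ℝ) • innerSL ℝ u) h = 2 * ⟪u, h⟫ := by simp
  rw [happly, Real.norm_eq_abs, norm_pow, norm_norm, abs_le]
  constructor <;>
    nlinarith [norm_add_sq_real u h, norm_sub_sq_real w h, abs_le.mp hinner]

theorem hasDerivAt_lyapunov_summand {S : Set F} (hS : Convex ℝ S) {P : F → F}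
    (hP : ∀ x, IsNearestPoint S x (P x)) (c : F) (k : ℝ) {x v : ℝ → F} {w : F} {t : ℝ}
    (hx : HasDerivAt x (v t) t) (hv : HasDerivAt v w t) :
    HasDerivAt (fun s => (1 / 2) * ‖v s‖ ^ 2 + ⟪x s - c, v s⟫ + (k / 2) * ‖x s - c‖ ^ 2
        + (1 / 2) * ‖x s - P (x s)‖ ^ 2)
      (⟪v t, w⟫ + ⟪x t - c, w⟫ + ‖v t‖ ^ 2 + k * ⟪x t - c, v t⟫ + ⟪x t - P (x t), v t⟫) t := by
  have hxc := hx.sub_const c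
  have hdist := (hasFDerivAt_norm_sub_nearestPoint_sq hS hP (x t)).comp_hasDerivAt t hx
  refine ((((hv.norm_sq).const_mul (1 / 2)).add (hxc.inner ℝ hv)).add
    ((hxc.norm_sq).const_mul (k / 2))).add (hdist.const_mul (1 / 2)) |>.congr_deriv ?_
  simp only [smul_apply, coe_innerSL_apply, smul_eq_mul, real_inner_self_eq_norm_sq,
    inner_sub_left]
  ring

end NearestPoint

section Consensus

variable {ι F : Type*} [Fintype ι] [NormedAddCommGroup F] [InnerProductSpace ℝ F]

theorem sum_sum_mul_inner_sub_sub_half_mul_norm_sq_eq_zero {A : ι → ι → ℝ}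
    (hA : ∀ i j, A i j = A j i) (Q : ι → F) (c : F) :
    ∑ i, ∑ j, (A i j * ⟪Q i - c, Q i - Q j⟫ - A i j / 2 * ‖Q i - Q j‖ ^ 2) = 0 := by
  -- Pairing the `(i, j)` and `(j, i)` terms, the base point `c` cancels.
  have hpair : ∀ i j, A i j * ⟪Q i - c, Q i - Q j⟫ + A j i * ⟪Q j - c, Q j - Q i⟫
      = A i j * ‖Q i - Q j‖ ^ 2 := by
    intro i j
    have hdiff : ⟪Q i - c, Q i - Q j⟫ - ⟪Q j - c, Q i - Q j⟫ = ‖Q i - Q j‖ ^ 2 := by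
      rw [← inner_sub_left, sub_sub_sub_cancel_right, real_inner_self_eq_norm_sq]
    rw [← hA i j, ← neg_sub (Q i) (Q j), inner_neg_right]
    linear_combination A i j * hdiff
  have hswap := Finset.sum_comm (s := Finset.univ) (t := Finset.univ)
    (f := fun i j => A i j * ⟪Q i - c, Q i - Q j⟫)
  have htotal : ∑ i, ∑ j, (A i j * ⟪Q i - c, Q i - Q j⟫ + A j i * ⟪Q j - c, Q j - Q i⟫)
      = ∑ i, ∑ j, A i j * ‖Q i - Q j‖ ^ 2 :=
    Finset.sum_congr rfl fun i _ => Finset.sum_congr rfl fun j _ => hpair i j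
  simp only [Finset.sum_add_distrib, Finset.sum_sub_distrib, div_eq_mul_inv,
    mul_right_comm _ (2 : ℝ)⁻¹, ← Finset.sum_mul] at htotal hswap ⊢
  linarith

theorem neg_mul_inner_sub_half_mul_norm_sq_le {a : ℝ} (ha : 0 ≤ a) (v d : F) :
    -(a * ⟪v, d⟫) - a / 2 * ‖d‖ ^ 2 ≤ a / 2 * ‖v‖ ^ 2 := by
  nlinarith [mul_nonneg ha (sq_nonneg ‖v + d‖), norm_add_sq_real v d]

theorem sum_neg_mul_inner_sub_half_mul_norm_sq_le {A : ι → ι → ℝ} {astar : ℝ}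
    (hA : ∀ i j, 0 ≤ A i j ∧ A i j ≤ astar) (Q : ι → F) (i : ι) (v : F) :
    ∑ j, (-(A i j * ⟪v, Q i - Q j⟫) - A i j / 2 * ‖Q i - Q j‖ ^ 2)
      ≤ (Fintype.card ι - 1 : ℝ) * (astar / 2 * ‖v‖ ^ 2) := by
  classical
  have hself : -(A i i * ⟪v, Q i - Q i⟫) - A i i / 2 * ‖Q i - Q i‖ ^ 2 = 0 := by simp
  rw [← Finset.sum_erase _ (f := fun j => -(A i j * ⟪v, Q i - Q j⟫) - A i j / 2 * ‖Q i - Q j‖ ^ 2)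
    hself]
  calc ∑ j ∈ Finset.univ.erase i, (-(A i j * ⟪v, Q i - Q j⟫) - A i j / 2 * ‖Q i - Q j‖ ^ 2)
      ≤ ∑ j ∈ Finset.univ.erase i, astar / 2 * ‖v‖ ^ 2 := by
        refine Finset.sum_le_sum fun j _ => ?_
        have := neg_mul_inner_sub_half_mul_norm_sq_le (hA i j).1 v (Q i - Q j)
        nlinarith [(hA i j).2, sq_nonneg ‖v‖]
    _ = (Fintype.card ι - 1 : ℝ) * (astar / 2 * ‖v‖ ^ 2) := by
        rw [Finset.sum_const, Finset.card_erase_of_mem (Finset.mem_univ i), nsmul_eq_mul,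
          Finset.card_univ, Nat.cast_pred (Fintype.card_pos_iff.mpr ⟨i⟩)]

end Consensus

theorem sum_lyapunov_deriv_le {ι F : Type*} [Fintype ι] [NormedAddCommGroup F]
    [InnerProductSpace ℝ F] {A : ι → ι → ℝ} (hA_symm : ∀ i j, A i j = A j i) {astar : ℝ}
    (hA : ∀ i j, 0 ≤ A i j ∧ A i j ≤ astar) {k : ℝ}
    (hk : 2 + (Fintype.card ι - 1 : ℝ) * astar / 2 < k) {c : F} {Q V W R : ι → F}
    (hW : ∀ i, W i = -k • V i - (∑ j, A i j • (Q i - Q j)) - (Q i - R i))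
    (hR : ∀ i, ‖Q i - R i‖ ^ 2 ≤ ⟪Q i - c, Q i - R i⟫) :
    ∑ i, (⟪V i, W i⟫ + ⟪Q i - c, W i⟫ + ‖V i‖ ^ 2 + k * ⟪Q i - c, V i⟫ + ⟪Q i - R i, V i⟫)
      ≤ -(∑ i, ‖Q i - R i‖ ^ 2) - ∑ i, ‖V i‖ ^ 2 := by
  set Y := fun i => ∑ j, (-(A i j * ⟪V i, Q i - Q j⟫) - A i j / 2 * ‖Q i - Q j‖ ^ 2)
  set Z := fun i => ∑ j, (A i j * ⟪Q i - c, Q i - Q j⟫ - A i j / 2 * ‖Q i - Q j‖ ^ 2)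
  have hterm : ∀ i,
      ⟪V i, W i⟫ + ⟪Q i - c, W i⟫ + ‖V i‖ ^ 2 + k * ⟪Q i - c, V i⟫ + ⟪Q i - R i, V i⟫
        = ((1 - k) * ‖V i‖ ^ 2 + Y i - ⟪Q i - c, Q i - R i⟫) - Z i := by
    intro i
    rw [hW i, real_inner_comm (V i) (Q i - R i)]
    simp only [Y, Z, inner_sub_right, real_inner_smul_right, inner_sum, Finset.sum_sub_distrib,
      Finset.sum_neg_distrib, real_inner_self_eq_norm_sq]
    ring
  calc _ = ∑ i, ((1 - k) * ‖V i‖ ^ 2 + Y i - ⟪Q i - c, Q i - R i⟫) - ∑ i, Z i := by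
        rw [← Finset.sum_sub_distrib]
        exact Finset.sum_congr rfl fun i _ => hterm i
    _ = ∑ i, ((1 - k) * ‖V i‖ ^ 2 + Y i - ⟪Q i - c, Q i - R i⟫) := by
        rw [sum_sum_mul_inner_sub_sub_half_mul_norm_sq_eq_zero hA_symm Q c, sub_zero]
    _ ≤ ∑ i, (-‖Q i - R i‖ ^ 2 - ‖V i‖ ^ 2) := by
        refine Finset.sum_le_sum fun i _ => ?_
        have hY := sum_neg_mul_inner_sub_half_mul_norm_sq_le hA Q i (V i)
        nlinarith [hR i, mul_le_mul_of_nonneg_right hk.le (sq_nonneg ‖V i‖)]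
    _ = -(∑ i, ‖Q i - R i‖ ^ 2) - ∑ i, ‖V i‖ ^ 2 := by
        rw [Finset.sum_sub_distrib, Finset.sum_neg_distrib]

theorem statement16_general
    (m n : ℕ)
    (X : Fin n → Set (EuclideanSpace ℝ (Fin m)))
    (hXconvex : ∀ i, Convex ℝ (X i))
    (q₀ : EuclideanSpace ℝ (Fin m)) (hq₀ : q₀ ∈ ⋂ i, X i)
    (P : Fin n → EuclideanSpace ℝ (Fin m) → EuclideanSpace ℝ (Fin m))
    (hPmem : ∀ i x, P i x ∈ X i)
    (hPproj : ∀ i x, ∀ y ∈ X i, ‖x - P i x‖ ≤ ‖x - y‖)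
    (a : Fin n → Fin n → ℝ → ℝ)
    (ha_symm : ∀ i j t, a i j t = a j i t)
    (astar : ℝ)
    (hbound : ∀ i j t, 0 ≤ a i j t ∧ a i j t ≤ astar)
    (k : ℝ) (hk : 2 + (n - 1 : ℝ) * astar / 2 < k)
    (q : Fin n → ℝ → EuclideanSpace ℝ (Fin m))
    (hq : ∀ i, ContDiff ℝ 2 (q i))
    (hODE : ∀ i t,
      deriv (deriv (q i)) t
        = -k • deriv (q i) t - (∑ j, a i j t • (q i t - q j t))
          - (q i t - P i (q i t))) :
    ∀ t : ℝ, ∃ d : ℝ,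
      HasDerivAt (fun s =>
          (1 / 2) * ∑ i, ‖deriv (q i) s‖ ^ 2
          + ∑ i, ⟪q i s - q₀, deriv (q i) s⟫
          + (k / 2) * ∑ i, ‖q i s - q₀‖ ^ 2
          + (1 / 2) * ∑ i, ‖q i s - P i (q i s)‖ ^ 2) d t ∧
      d ≤ -(∑ i, Metric.infDist (q i t) (X i) ^ 2) - ∑ i, ‖deriv (q i) t‖ ^ 2 ∧
      -(∑ i, Metric.infDist (q i t) (X i) ^ 2) - ∑ i, ‖deriv (q i) t‖ ^ 2 ≤ 0 := by
  intro t
  have hP : ∀ i x, IsNearestPoint (X i) x (P i x) := fun i x => ⟨hPmem i x, hPproj i x⟩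
  have hvel : ∀ i, HasDerivAt (q i) (deriv (q i) t) t := fun i =>
    ((hq i).differentiable two_ne_zero t).hasDerivAt
  have hacc : ∀ i, HasDerivAt (deriv (q i)) (deriv (deriv (q i)) t) t := fun i =>
    ((hq i).differentiable_deriv_two t).hasDerivAt
  have hV := HasDerivAt.fun_sum (u := Finset.univ) fun i _ =>
    hasDerivAt_lyapunov_summand (hXconvex i) (hP i) q₀ k (hvel i) (hacc i)
  refine ⟨_, hV.congr_of_eventuallyEq (Filter.Eventually.of_forall fun s => ?_), ?_, ?_⟩
  · simp only [Finset.sum_add_distrib, Finset.mul_sum]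
  · calc _ ≤ -(∑ i, ‖q i t - P i (q i t)‖ ^ 2) - ∑ i, ‖deriv (q i) t‖ ^ 2 :=
          sum_lyapunov_deriv_le (fun i j => ha_symm i j t) (fun i j => hbound i j t)
            (by simpa using hk) (fun i => hODE i t) fun i =>
            (hP i _).norm_sub_sq_le_inner (hXconvex i) (Set.mem_iInter.mp hq₀ i)
      _ = _ := by simp only [fun i => (hP i (q i t)).norm_sub_eq_infDist]
  · rw [neg_sub_left, neg_nonpos]
    positivity

/-- Along every C² solution of the switching closed loop
`q̈ᵢ = -k q̇ᵢ - ∑ⱼ aᵢⱼ(t)(qᵢ - qⱼ) - (qᵢ - P_{Xᵢ}(qᵢ))` with `k > 2 + (n-1)a*/2`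
and `q₀ ∈ X₀`, the Lyapunov function
`V = (1/2)∑ᵢ‖q̇ᵢ‖² + ∑ᵢ⟨qᵢ - q₀, q̇ᵢ⟩ + (k/2)∑ᵢ‖qᵢ - q₀‖² + (1/2)∑ᵢ‖qᵢ - P_{Xᵢ}(qᵢ)‖²`
satisfies `dV/dt ≤ -∑ᵢ ‖qᵢ‖²_{Xᵢ} - ∑ᵢ ‖q̇ᵢ‖² ≤ 0` at every time. -/
theorem statement16
    (m n : ℕ)
    (X : Fin n → Set (EuclideanSpace ℝ (Fin m)))
    (hXclosed : ∀ i, IsClosed (X i))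
    (hXconvex : ∀ i, Convex ℝ (X i))
    (q₀ : EuclideanSpace ℝ (Fin m)) (hq₀ : q₀ ∈ ⋂ i, X i)
    (P : Fin n → EuclideanSpace ℝ (Fin m) → EuclideanSpace ℝ (Fin m))
    (hPmem : ∀ i x, P i x ∈ X i)
    (hPproj : ∀ i x, ∀ y ∈ X i, ‖x - P i x‖ ≤ ‖x - y‖)
    (a : Fin n → Fin n → ℝ → ℝ)
    (hmeas : ∀ i j, Measurable (a i j))
    (ha_symm : ∀ i j t, a i j t = a j i t)
    (astar : ℝ)
    (hbound : ∀ i j t, 0 ≤ a i j t ∧ a i j t ≤ astar)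
    (k : ℝ) (hk : 2 + (n - 1 : ℝ) * astar / 2 < k)
    (q : Fin n → ℝ → EuclideanSpace ℝ (Fin m))
    (hq : ∀ i, ContDiff ℝ 2 (q i))
    (hODE : ∀ i t,
      deriv (deriv (q i)) t
        = -k • deriv (q i) t - (∑ j, a i j t • (q i t - q j t))
          - (q i t - P i (q i t))) :
    ∀ t : ℝ, ∃ d : ℝ,
      HasDerivAt (fun s =>
          (1 / 2) * ∑ i, ‖deriv (q i) s‖ ^ 2
          + ∑ i, ⟪q i s - q₀, deriv (q i) s⟫
          + (k / 2) * ∑ i, ‖q i s - q₀‖ ^ 2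
          + (1 / 2) * ∑ i, ‖q i s - P i (q i s)‖ ^ 2) d t ∧
      d ≤ -(∑ i, Metric.infDist (q i t) (X i) ^ 2) - ∑ i, ‖deriv (q i) t‖ ^ 2 ∧
      -(∑ i, Metric.infDist (q i t) (X i) ^ 2) - ∑ i, ‖deriv (q i) t‖ ^ 2 ≤ 0 :=
  statement16_general m n X hXconvex q₀ hq₀ P hPmem hPproj a ha_symm astar hbound k hk q hq hODE
end
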